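/- arXiv:1612.01117 — 11 statements merged into one kernel-verified Lean document; each statement's English description precedes it below -/
import Mathlib

section
/- Let $A$ be an abelian group, $G, H$ finite groups, $U \le G \times H$, and $\phi : U \to A$ a group homomorphism. Let $K = k_1(U)$, $L = k_2(U)$, and let $\phi_1 : K \to A$, $\phi_2 : L \to A$ be defined by $\phi|_{K \times L} = \phi_1 \times \phi_2^{-1}$. Set $P = p_1(U)$, $Q = p_2(U)$, $\hat K = \ker \phi_1$, $\hat L = \ker \phi_2$, $\tilde K = \hat K P' \cap K$, and $\tilde L = \hat L Q' \cap L$, where $P'$ and $Q'$ denote derived subgroups. Then the projection maps induce group isomorphisms $\tilde K / \hat K \cong \ker(\phi|_{\tilde K \times \tilde L})/(\hat K \times \hat L) \cong \tilde L / \hat L$. -/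
def k1 {G H : Type*} [Group G] [Group H] (U : Subgroup (G × H)) : Subgroup G :=
  U.comap (MonoidHom.inl G H)

def k2 {G H : Type*} [Group G] [Group H] (U : Subgroup (G × H)) : Subgroup H :=
  U.comap (MonoidHom.inr G H)

def p1 {G H : Type*} [Group G] [Group H] (U : Subgroup (G × H)) : Subgroup G :=
  U.map (MonoidHom.fst G H)

def p2 {G H : Type*} [Group G] [Group H] (U : Subgroup (G × H)) : Subgroup H :=
  U.map (MonoidHom.snd G H)

/-- `φ₁ : k1 U → A`, given by `g ↦ φ (g, 1)`. -/
def phi1 {G H A : Type*} [Group G] [Group H] [CommGroup A] (U : Subgroup (G × H))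
    (φ : U →* A) : k1 U →* A :=
  φ.comp ((MonoidHom.inl G H).subgroupComap U)

/-- `φ₂ : k2 U → A`, given by `h ↦ φ (1, h)⁻¹`. -/
def phi2 {G H A : Type*} [Group G] [Group H] [CommGroup A] (U : Subgroup (G × H))
    (φ : U →* A) : k2 U →* A :=
  (φ.comp ((MonoidHom.inr G H).subgroupComap U))⁻¹

/-- `K̂ = ker φ₁`, as a subgroup of `G`. -/
def Khat {G H A : Type*} [Group G] [Group H] [CommGroup A] (U : Subgroup (G × H))
    (φ : U →* A) : Subgroup G :=
  (phi1 U φ).ker.map (k1 U).subtype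

/-- `L̂ = ker φ₂`, as a subgroup of `H`. -/
def Lhat {G H A : Type*} [Group G] [Group H] [CommGroup A] (U : Subgroup (G × H))
    (φ : U →* A) : Subgroup H :=
  (phi2 U φ).ker.map (k2 U).subtype

/-- `K̃ = K̂ P' ∩ K`, where `P' = [p1 U, p1 U]`. -/
def Ktilde {G H A : Type*} [Group G] [Group H] [CommGroup A] (U : Subgroup (G × H))
    (φ : U →* A) : Subgroup G :=
  (Khat U φ ⊔ ⁅p1 U, p1 U⁆) ⊓ k1 U

/-- `L̃ = L̂ Q' ∩ L`, where `Q' = [p2 U, p2 U]`. -/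
def Ltilde {G H A : Type*} [Group G] [Group H] [CommGroup A] (U : Subgroup (G × H))
    (φ : U →* A) : Subgroup H :=
  (Lhat U φ ⊔ ⁅p2 U, p2 U⁆) ⊓ k2 U

/-- `ker (φ|_{K̃ × L̃})`, as a subgroup of `G × H`. -/
def Dker {G H A : Type*} [Group G] [Group H] [CommGroup A] (U : Subgroup (G × H))
    (φ : U →* A) : Subgroup (G × H) :=
  (φ.ker.map U.subtype) ⊓ ((Ktilde U φ).prod (Ltilde U φ))

section Aux
variable {G H A : Type*} [Group G] [Group H] [CommGroup A] (U : Subgroup (G × H)) (φ : U →* A)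

lemma mem_Khat' {g : G} : g ∈ Khat U φ ↔ ∃ h : (g, 1) ∈ U, φ ⟨(g, 1), h⟩ = 1 := by
  simp only [Khat, Subgroup.mem_map, MonoidHom.mem_ker]
  constructor
  · rintro ⟨⟨x, hx⟩, hker, rfl⟩
    exact ⟨hx, hker⟩
  · rintro ⟨h, hφ⟩
    exact ⟨⟨g, h⟩, hφ, rfl⟩

lemma mem_Lhat' {h : H} : h ∈ Lhat U φ ↔ ∃ hh : (1, h) ∈ U, φ ⟨(1, h), hh⟩ = 1 := by
  simp only [Lhat, Subgroup.mem_map, MonoidHom.mem_ker, phi2, MonoidHom.inv_apply, inv_eq_one]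
  constructor
  · rintro ⟨⟨x, hx⟩, hker, rfl⟩
    exact ⟨hx, hker⟩
  · rintro ⟨hm, hφ⟩
    exact ⟨⟨h, hm⟩, hφ, rfl⟩


lemma k1_le_p1 : k1 U ≤ p1 U := fun g hg => ⟨(g, 1), hg, rfl⟩

lemma k2_le_p2 : k2 U ≤ p2 U := fun h hh => ⟨(1, h), hh, rfl⟩

lemma Khat_le_k1 : Khat U φ ≤ k1 U := by
  intro g hg; exact ((mem_Khat' U φ).mp hg).1

lemma Lhat_le_k2 : Lhat U φ ≤ k2 U := by
  intro h hh; exact ((mem_Lhat' U φ).mp hh).1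

lemma Khat_conj {p : G} (hp : p ∈ p1 U) {g : G} (hg : g ∈ Khat U φ) :
    p * g * p⁻¹ ∈ Khat U φ := by
  obtain ⟨u, hu, rfl⟩ := hp
  rw [mem_Khat'] at hg ⊢
  obtain ⟨h1, hφ⟩ := hg
  have heq : (u.1 * g * u.1⁻¹, (1 : H)) = u * (g, 1) * u⁻¹ := by
    simp [Prod.ext_iff, mul_assoc]
  have hmem : (u.1 * g * u.1⁻¹, (1 : H)) ∈ U := by
    rw [heq]; exact U.mul_mem (U.mul_mem hu h1) (U.inv_mem hu)
  refine ⟨hmem, ?_⟩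
  show φ ⟨(u.1 * g * u.1⁻¹, 1), hmem⟩ = 1
  have he : (⟨(u.1 * g * u.1⁻¹, 1), hmem⟩ : U) = ⟨u, hu⟩ * ⟨(g, 1), h1⟩ * ⟨u, hu⟩⁻¹ :=
    Subtype.ext heq
  rw [he, map_mul, map_mul, map_inv, hφ, mul_one, mul_inv_cancel]

lemma Lhat_conj {q : H} (hq : q ∈ p2 U) {h : H} (hh : h ∈ Lhat U φ) :
    q * h * q⁻¹ ∈ Lhat U φ := by
  obtain ⟨u, hu, rfl⟩ := hq
  rw [mem_Lhat'] at hh ⊢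
  obtain ⟨h1, hφ⟩ := hh
  have heq : ((1 : G), u.2 * h * u.2⁻¹) = u * (1, h) * u⁻¹ := by
    simp [Prod.ext_iff, mul_assoc]
  have hmem : ((1 : G), u.2 * h * u.2⁻¹) ∈ U := by
    rw [heq]; exact U.mul_mem (U.mul_mem hu h1) (U.inv_mem hu)
  refine ⟨hmem, ?_⟩
  show φ ⟨(1, u.2 * h * u.2⁻¹), hmem⟩ = 1
  have he : (⟨(1, u.2 * h * u.2⁻¹), hmem⟩ : U) = ⟨u, hu⟩ * ⟨(1, h), h1⟩ * ⟨u, hu⟩⁻¹ :=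
    Subtype.ext heq
  rw [he, map_mul, map_mul, map_inv, hφ, mul_one, mul_inv_cancel]

lemma sup_decomp {G' : Type*} [Group G'] {N P : Subgroup G'}
    (hnorm : ∀ c ∈ P, ∀ k ∈ N, c * k * c⁻¹ ∈ N) {a : G'} (ha : a ∈ N ⊔ P) :
    ∃ k ∈ N, ∃ c ∈ P, a = k * c := by
  let S : Subgroup G' :=
  { carrier := {x | ∃ k ∈ N, ∃ c ∈ P, x = k * c}
    one_mem' := ⟨1, N.one_mem, 1, P.one_mem, by simp⟩
    mul_mem' := by
      rintro x y ⟨k, hk, c, hc, rfl⟩ ⟨k', hk', c', hc', rfl⟩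
      exact ⟨k * (c * k' * c⁻¹), N.mul_mem hk (hnorm c hc k' hk'), c * c',
        P.mul_mem hc hc', by group⟩
    inv_mem' := by
      rintro x ⟨k, hk, c, hc, rfl⟩
      exact ⟨c⁻¹ * k⁻¹ * c, by simpa using hnorm c⁻¹ (P.inv_mem hc) k⁻¹ (N.inv_mem hk),
        c⁻¹, P.inv_mem hc, by group⟩ }
  have hN : N ≤ S := fun x hx => ⟨x, hx, 1, P.one_mem, by simp⟩
  have hP : P ≤ S := fun x hx => ⟨1, N.one_mem, x, hx, by simp⟩
  exact sup_le hN hP ha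

end Aux

section Aux2
variable {G H A : Type*} [Group G] [Group H] [CommGroup A] (U : Subgroup (G × H)) (φ : U →* A)

lemma commP_le_p1 : ⁅p1 U, p1 U⁆ ≤ p1 U :=
  Subgroup.commutator_le.mpr fun g hg h hh => by
    exact mul_mem (mul_mem (mul_mem hg hh) (inv_mem hg)) (inv_mem hh)

lemma commQ_le_p2 : ⁅p2 U, p2 U⁆ ≤ p2 U :=
  Subgroup.commutator_le.mpr fun g hg h hh => by
    exact mul_mem (mul_mem (mul_mem hg hh) (inv_mem hg)) (inv_mem hh)

lemma commU_eq : (⁅U, U⁆ : Subgroup (G × H)) = Subgroup.map U.subtype (commutator U) := by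
  rw [commutator_def, Subgroup.map_commutator]
  congr 1 <;> rw [← MonoidHom.range_eq_map, Subgroup.range_subtype]

lemma phi_comm {u : G × H} (hu : u ∈ (⁅U, U⁆ : Subgroup (G × H))) :
    ∃ h : u ∈ U, φ ⟨u, h⟩ = 1 := by
  rw [commU_eq] at hu
  obtain ⟨v, hv, rfl⟩ := hu
  exact ⟨v.2, Abelianization.commutator_subset_ker φ hv⟩

lemma commP_eq : (⁅p1 U, p1 U⁆ : Subgroup G) = Subgroup.map (MonoidHom.fst G H) ⁅U, U⁆ := by
  rw [Subgroup.map_commutator]; rfl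

lemma commQ_eq : (⁅p2 U, p2 U⁆ : Subgroup H) = Subgroup.map (MonoidHom.snd G H) ⁅U, U⁆ := by
  rw [Subgroup.map_commutator]; rfl

lemma exists_rep_K {a : G} (ha : a ∈ Ktilde U φ) :
    ∃ x : G × H, ∃ hx : x ∈ U, φ ⟨x, hx⟩ = 1 ∧ x.1 ∈ Ktilde U φ ∧ x.2 ∈ Ltilde U φ ∧
      x.1⁻¹ * a ∈ Khat U φ := by
  obtain ⟨haS, haK⟩ := Subgroup.mem_inf.mp ha
  obtain ⟨k, hk, c, hc, rfl⟩ := sup_decomp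
    (fun c hc g hg => Khat_conj U φ (commP_le_p1 U hc) hg) haS
  have hcK : c ∈ k1 U := by
    have : c = k⁻¹ * (k * c) := by group
    rw [this]
    exact mul_mem (inv_mem (Khat_le_k1 U φ hk)) haK
  obtain ⟨u, huc, hu1⟩ : ∃ u ∈ (⁅U, U⁆ : Subgroup (G × H)), (MonoidHom.fst G H) u = c := by
    rw [← Subgroup.mem_map, ← commP_eq]; exact hc
  obtain ⟨huU, hφu⟩ := phi_comm U φ huc
  have hu2 : u.2 ∈ k2 U := by
    have h1 : ((1 : G), u.2) ∈ U := by
      have heq : ((1 : G), u.2) = (c, 1)⁻¹ * u := by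
        simp [Prod.ext_iff, ← hu1]
      rw [heq]; exact U.mul_mem (U.inv_mem hcK) huU
    exact h1
  have hu1' : u.1 = c := hu1
  refine ⟨u, huU, hφu, ?_, ?_, ?_⟩
  · exact Subgroup.mem_inf.mpr ⟨Subgroup.mem_sup_right (hu1' ▸ hc), hu1' ▸ hcK⟩
  · refine Subgroup.mem_inf.mpr ⟨Subgroup.mem_sup_right ?_, hu2⟩
    rw [commQ_eq]
    exact ⟨u, huc, rfl⟩
  · rw [hu1']
    have : c⁻¹ * (k * c) = c⁻¹ * k * (c⁻¹)⁻¹ := by group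
    rw [this]
    exact Khat_conj U φ (Subgroup.inv_mem _ (k1_le_p1 U hcK)) hk

lemma exists_rep_L {b : H} (hb : b ∈ Ltilde U φ) :
    ∃ x : G × H, ∃ hx : x ∈ U, φ ⟨x, hx⟩ = 1 ∧ x.1 ∈ Ktilde U φ ∧ x.2 ∈ Ltilde U φ ∧
      x.2⁻¹ * b ∈ Lhat U φ := by
  obtain ⟨hbS, hbL⟩ := Subgroup.mem_inf.mp hb
  obtain ⟨k, hk, c, hc, rfl⟩ := sup_decomp
    (fun c hc g hg => Lhat_conj U φ (commQ_le_p2 U hc) hg) hbS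
  have hcL : c ∈ k2 U := by
    have : c = k⁻¹ * (k * c) := by group
    rw [this]
    exact mul_mem (inv_mem (Lhat_le_k2 U φ hk)) hbL
  obtain ⟨u, huc, hu2⟩ : ∃ u ∈ (⁅U, U⁆ : Subgroup (G × H)), (MonoidHom.snd G H) u = c := by
    rw [← Subgroup.mem_map, ← commQ_eq]; exact hc
  obtain ⟨huU, hφu⟩ := phi_comm U φ huc
  have hu1 : u.1 ∈ k1 U := by
    have h1 : (u.1, (1 : H)) ∈ U := by
      have heq : (u.1, (1 : H)) = u * (1, c)⁻¹ := by
        simp [Prod.ext_iff, ← hu2]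
      rw [heq]; exact U.mul_mem huU (U.inv_mem hcL)
    exact h1
  have hu2' : u.2 = c := hu2
  refine ⟨u, huU, hφu, ?_, ?_, ?_⟩
  · refine Subgroup.mem_inf.mpr ⟨Subgroup.mem_sup_right ?_, hu1⟩
    rw [commP_eq]
    exact ⟨u, huc, rfl⟩
  · exact Subgroup.mem_inf.mpr ⟨Subgroup.mem_sup_right (hu2' ▸ hc), hu2' ▸ hcL⟩
  · rw [hu2']
    have : c⁻¹ * (k * c) = c⁻¹ * k * (c⁻¹)⁻¹ := by group
    rw [this]
    exact Lhat_conj U φ (Subgroup.inv_mem _ (k2_le_p2 U hcL)) hk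

lemma mem_iff_of_ker {x : G × H} (hx : x ∈ U) (h1 : x.1 ∈ k1 U) (h2 : x.2 ∈ k2 U)
    (hφ : φ ⟨x, hx⟩ = 1) : (x.1 ∈ Khat U φ ↔ x.2 ∈ Lhat U φ) := by
  have hx1 : (x.1, (1 : H)) ∈ U := h1
  have hx2 : ((1 : G), x.2) ∈ U := h2
  have hprod : (⟨(x.1, 1), hx1⟩ : U) * ⟨(1, x.2), hx2⟩ = ⟨x, hx⟩ :=
    Subtype.ext (by simp [Prod.ext_iff])
  have key : φ ⟨(x.1, 1), hx1⟩ * φ ⟨(1, x.2), hx2⟩ = 1 := by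
    rw [← map_mul, hprod, hφ]
  rw [mem_Khat', mem_Lhat']
  constructor
  · rintro ⟨h, hφ1⟩
    refine ⟨hx2, ?_⟩
    have : φ ⟨(x.1, 1), hx1⟩ = 1 := by
      convert hφ1 using 2
    rwa [this, one_mul] at key
  · rintro ⟨h, hφ2⟩
    refine ⟨hx1, ?_⟩
    have : φ ⟨(1, x.2), hx2⟩ = 1 := by
      convert hφ2 using 2
    rwa [this, mul_one] at key

end Aux2

section Main
variable {G H A : Type*} [Group G] [Group H] [CommGroup A] (U : Subgroup (G × H)) (φ : U →* A)

lemma Khat_le_Ktilde : Khat U φ ≤ Ktilde U φ :=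
  le_inf le_sup_left (Khat_le_k1 U φ)

lemma Lhat_le_Ltilde : Lhat U φ ≤ Ltilde U φ :=
  le_inf le_sup_left (Lhat_le_k2 U φ)

lemma Ktilde_le_k1 : Ktilde U φ ≤ k1 U := inf_le_right

lemma Ltilde_le_k2 : Ltilde U φ ≤ k2 U := inf_le_right

lemma normal_K : ((Khat U φ).subgroupOf (Ktilde U φ)).Normal := by
  constructor
  intro n hn g
  rw [Subgroup.mem_subgroupOf] at hn ⊢
  have hc : (↑(g * n * g⁻¹) : G) = ↑g * ↑n * (↑g)⁻¹ := by simp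
  rw [hc]
  exact Khat_conj U φ (k1_le_p1 U (Ktilde_le_k1 U φ g.2)) hn

lemma normal_L : ((Lhat U φ).subgroupOf (Ltilde U φ)).Normal := by
  constructor
  intro n hn g
  rw [Subgroup.mem_subgroupOf] at hn ⊢
  have hc : (↑(g * n * g⁻¹) : H) = ↑g * ↑n * (↑g)⁻¹ := by simp
  rw [hc]
  exact Lhat_conj U φ (k2_le_p2 U (Ltilde_le_k2 U φ g.2)) hn

def DtoK : Dker U φ →* Ktilde U φ where
  toFun x := ⟨(x : G × H).1, (Subgroup.mem_prod.mp (Subgroup.mem_inf.mp x.2).2).1⟩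
  map_one' := rfl
  map_mul' x y := rfl

def DtoL : Dker U φ →* Ltilde U φ where
  toFun x := ⟨(x : G × H).2, (Subgroup.mem_prod.mp (Subgroup.mem_inf.mp x.2).2).2⟩
  map_one' := rfl
  map_mul' x y := rfl

lemma mem_Dker {x : G × H} : x ∈ Dker U φ ↔
    (∃ hx : x ∈ U, φ ⟨x, hx⟩ = 1) ∧ x.1 ∈ Ktilde U φ ∧ x.2 ∈ Ltilde U φ := by
  simp only [Dker, Subgroup.mem_inf, Subgroup.mem_prod, Subgroup.mem_map, MonoidHom.mem_ker]
  constructor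
  · rintro ⟨⟨⟨v, hv⟩, hker, rfl⟩, h⟩
    exact ⟨⟨hv, hker⟩, h⟩
  · rintro ⟨⟨hx, hker⟩, h⟩
    exact ⟨⟨⟨x, hx⟩, hker, rfl⟩, h⟩

lemma Dker_fst_iff {x : G × H} (hx : x ∈ Dker U φ) :
    (x.1 ∈ Khat U φ ↔ x.2 ∈ Lhat U φ) := by
  obtain ⟨⟨hxU, hφx⟩, h1, h2⟩ := (mem_Dker U φ).mp hx
  exact mem_iff_of_ker U φ hxU (Ktilde_le_k1 U φ h1) (Ltilde_le_k2 U φ h2) hφx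

end Main

/-- Proposition 1.3(d): the projection maps induce group isomorphisms
`K̃/K̂ ≅ ker(φ|_{K̃×L̃})/(K̂ × L̂) ≅ L̃/L̂`. -/
theorem tilde_quotients_isomorphic {G H A : Type*} [Group G] [Group H] [CommGroup A]
    [Finite G] [Finite H] (U : Subgroup (G × H)) (φ : U →* A) :
    ∃ (h1 : ((Khat U φ).subgroupOf (Ktilde U φ)).Normal)
      (h2 : ((Lhat U φ).subgroupOf (Ltilde U φ)).Normal)
      (h3 : (((Khat U φ).prod (Lhat U φ)).subgroupOf (Dker U φ)).Normal),
      haveI := h1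
      haveI := h2
      haveI := h3
      ∃ (e1 : (Dker U φ ⧸ ((Khat U φ).prod (Lhat U φ)).subgroupOf (Dker U φ)) ≃*
              (Ktilde U φ ⧸ (Khat U φ).subgroupOf (Ktilde U φ)))
        (e2 : (Dker U φ ⧸ ((Khat U φ).prod (Lhat U φ)).subgroupOf (Dker U φ)) ≃*
              (Ltilde U φ ⧸ (Lhat U φ).subgroupOf (Ltilde U φ))),
        (∀ (x : Dker U φ) (a : Ktilde U φ),
          e1 (QuotientGroup.mk x) = QuotientGroup.mk a ↔
            ((x : G × H).1)⁻¹ * (a : G) ∈ Khat U φ) ∧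
        (∀ (x : Dker U φ) (b : Ltilde U φ),
          e2 (QuotientGroup.mk x) = QuotientGroup.mk b ↔
            ((x : G × H).2)⁻¹ * (b : H) ∈ Lhat U φ) := by
  haveI h1 := normal_K U φ
  haveI h2 := normal_L U φ
  set ψK : Dker U φ →* Ktilde U φ ⧸ (Khat U φ).subgroupOf (Ktilde U φ) :=
    (QuotientGroup.mk' _).comp (DtoK U φ) with hψK
  set ψL : Dker U φ →* Ltilde U φ ⧸ (Lhat U φ).subgroupOf (Ltilde U φ) :=
    (QuotientGroup.mk' _).comp (DtoL U φ) with hψL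
  have hkerK : ψK.ker = ((Khat U φ).prod (Lhat U φ)).subgroupOf (Dker U φ) := by
    ext x
    rw [MonoidHom.mem_ker, Subgroup.mem_subgroupOf, Subgroup.mem_prod]
    rw [hψK, MonoidHom.comp_apply, QuotientGroup.mk'_apply, QuotientGroup.eq_one_iff,
      Subgroup.mem_subgroupOf]
    have hfst : ((DtoK U φ x : Ktilde U φ) : G) = (x : G × H).1 := rfl
    rw [hfst]
    exact ⟨fun h => ⟨h, (Dker_fst_iff U φ x.2).mp h⟩, fun h => h.1⟩
  have hkerL : ψL.ker = ((Khat U φ).prod (Lhat U φ)).subgroupOf (Dker U φ) := by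
    ext x
    rw [MonoidHom.mem_ker, Subgroup.mem_subgroupOf, Subgroup.mem_prod]
    rw [hψL, MonoidHom.comp_apply, QuotientGroup.mk'_apply, QuotientGroup.eq_one_iff,
      Subgroup.mem_subgroupOf]
    have hsnd : ((DtoL U φ x : Ltilde U φ) : H) = (x : G × H).2 := rfl
    rw [hsnd]
    exact ⟨fun h => ⟨(Dker_fst_iff U φ x.2).mpr h, h⟩, fun h => h.2⟩
  haveI h3 : (((Khat U φ).prod (Lhat U φ)).subgroupOf (Dker U φ)).Normal :=
    hkerK ▸ ψK.normal_ker
  have hsurjK : Function.Surjective ψK := by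
    intro q
    obtain ⟨a, rfl⟩ := QuotientGroup.mk'_surjective _ q
    obtain ⟨x, hx, hφx, hx1, hx2, hrest⟩ := exists_rep_K U φ a.2
    have hxD : x ∈ Dker U φ := (mem_Dker U φ).mpr ⟨⟨hx, hφx⟩, hx1, hx2⟩
    refine ⟨⟨x, hxD⟩, ?_⟩
    show QuotientGroup.mk (DtoK U φ ⟨x, hxD⟩) = QuotientGroup.mk a
    rw [QuotientGroup.eq, Subgroup.mem_subgroupOf]
    exact hrest
  have hsurjL : Function.Surjective ψL := by
    intro q
    obtain ⟨b, rfl⟩ := QuotientGroup.mk'_surjective _ q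
    obtain ⟨x, hx, hφx, hx1, hx2, hrest⟩ := exists_rep_L U φ b.2
    have hxD : x ∈ Dker U φ := (mem_Dker U φ).mpr ⟨⟨hx, hφx⟩, hx1, hx2⟩
    refine ⟨⟨x, hxD⟩, ?_⟩
    show QuotientGroup.mk (DtoL U φ ⟨x, hxD⟩) = QuotientGroup.mk b
    rw [QuotientGroup.eq, Subgroup.mem_subgroupOf]
    exact hrest
  refine ⟨h1, h2, h3,
    (QuotientGroup.quotientMulEquivOfEq hkerK.symm).trans
      (QuotientGroup.quotientKerEquivOfSurjective ψK hsurjK),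
    (QuotientGroup.quotientMulEquivOfEq hkerL.symm).trans
      (QuotientGroup.quotientKerEquivOfSurjective ψL hsurjL),
    ?_, ?_⟩
  · intro x a
    rw [MulEquiv.trans_apply, QuotientGroup.quotientMulEquivOfEq_mk]
    have happ : (QuotientGroup.quotientKerEquivOfSurjective ψK hsurjK)
        (QuotientGroup.mk x) = ψK x := QuotientGroup.kerLift_mk ψK x
    rw [happ]
    show QuotientGroup.mk (DtoK U φ x) = QuotientGroup.mk a ↔ _
    rw [QuotientGroup.eq, Subgroup.mem_subgroupOf]
    exact Iff.rfl
  · intro x b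
    rw [MulEquiv.trans_apply, QuotientGroup.quotientMulEquivOfEq_mk]
    have happ : (QuotientGroup.quotientKerEquivOfSurjective ψL hsurjL)
        (QuotientGroup.mk x) = ψL x := QuotientGroup.kerLift_mk ψL x
    rw [happ]
    show QuotientGroup.mk (DtoL U φ x) = QuotientGroup.mk b ↔ _
    rw [QuotientGroup.eq, Subgroup.mem_subgroupOf]
    exact Iff.rfl
end

section
/- Let $A$ be an abelian group, $G,H,K$ groups, $U \le G \times H$, $V \le H \times K$, and $\phi : U \to A$, $\psi : V \to A$ homomorphisms such that $\phi_2$ and $\psi_1$ agree on $k_2(U) \cap k_1(V)$. Then the map $\phi * \psi : U * V \to A$ given by $(\phi*\psi)(g,k) = \phi(g,h)\psi(h,k)$, for any $h$ with $(g,h) \in U$ and $(h,k) \in V$, is a well-defined group homomorphism. -/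
/-!
Consider the subgroup `T ≤ G × H × K` of triples `(g, h, k)` with `(g, h) ∈ U` and `(h, k) ∈ V`.
On `T` the formula `φ(g, h) ψ(h, k)` is a homomorphism (`A` is abelian), and `T` maps onto `U * V`
by `(g, h, k) ↦ (g, k)`. The kernel of this projection consists of the triples `(1, h, 1)`, on
which the homomorphism is `φ(1, h) ψ(h, 1) = 1` by the compatibility of `φ₂` and `ψ₁`; hence it
descends to `U * V`.
-/

def starSub {G H K : Type*} [Group G] [Group H] [Group K]
    (U : Subgroup (G × H)) (V : Subgroup (H × K)) : Subgroup (G × K) where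
  carrier := {x | ∃ h : H, (x.1, h) ∈ U ∧ (h, x.2) ∈ V}
  one_mem' := ⟨1, U.one_mem, V.one_mem⟩
  mul_mem' := by
    rintro x y ⟨h, hx1, hx2⟩ ⟨h', hy1, hy2⟩
    exact ⟨h * h', U.mul_mem hx1 hy1, V.mul_mem hx2 hy2⟩
  inv_mem' := by
    rintro x ⟨h, hx1, hx2⟩
    exact ⟨h⁻¹, U.inv_mem hx1, V.inv_mem hx2⟩

section ComposableTriples

variable {G H K : Type*} [Group G] [Group H] [Group K]
  (U : Subgroup (G × H)) (V : Subgroup (H × K))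

def composableTriples : Subgroup (G × H × K) where
  carrier := {x | (x.1, x.2.1) ∈ U ∧ (x.2.1, x.2.2) ∈ V}
  one_mem' := ⟨U.one_mem, V.one_mem⟩
  mul_mem' := fun ⟨hU, hV⟩ ⟨hU', hV'⟩ => ⟨U.mul_mem hU hU', V.mul_mem hV hV'⟩
  inv_mem' := fun ⟨hU, hV⟩ => ⟨U.inv_mem hU, V.inv_mem hV⟩

namespace composableTriples

def leftHom : composableTriples U V →* U where
  toFun x := ⟨(x.1.1, x.1.2.1), x.2.1⟩
  map_one' := rfl
  map_mul' _ _ := rfl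

def rightHom : composableTriples U V →* V where
  toFun x := ⟨(x.1.2.1, x.1.2.2), x.2.2⟩
  map_one' := rfl
  map_mul' _ _ := rfl

def outerHom : composableTriples U V →* starSub U V where
  toFun x := ⟨(x.1.1, x.1.2.2), x.1.2.1, x.2⟩
  map_one' := rfl
  map_mul' _ _ := rfl

theorem outerHom_surjective : Function.Surjective (outerHom U V) := by
  rintro ⟨⟨g, k⟩, h, hU, hV⟩
  exact ⟨⟨(g, h, k), hU, hV⟩, rfl⟩

variable {U V}

theorem ker_outerHom_le {A : Type*} [CommGroup A] {φ : U →* A} {ψ : V →* A}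
    (hcomp : ∀ (h : H) (hU : ((1 : G), h) ∈ U) (hV : (h, (1 : K)) ∈ V),
      (φ ⟨((1 : G), h), hU⟩)⁻¹ = ψ ⟨(h, (1 : K)), hV⟩) :
    (outerHom U V).ker ≤ (φ.comp (leftHom U V) * ψ.comp (rightHom U V)).ker := by
  rintro ⟨⟨g, h, k⟩, hU, hV⟩ hx
  obtain ⟨rfl, rfl⟩ : g = 1 ∧ k = 1 := by
    simpa [outerHom, Subtype.ext_iff, Prod.ext_iff] using hx
  simp [leftHom, rightHom, ← hcomp h hU hV]

end composableTriples

end ComposableTriples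

/-- If `φ : U → A` and `ψ : V → A` satisfy `φ₂ = ψ₁` on `k2(U) ∩ k1(V)`
(recall `φ₂(h) = φ(1,h)⁻¹` and `ψ₁(h) = ψ(h,1)`), then
`(φ * ψ)(g,k) = φ(g,h) ψ(h,k)` (for any `h` with `(g,h) ∈ U`, `(h,k) ∈ V`)
is a well-defined group homomorphism `U * V → A`. -/
theorem starHom_exists {G H K A : Type*} [Group G] [Group H] [Group K] [CommGroup A]
    (U : Subgroup (G × H)) (V : Subgroup (H × K)) (φ : U →* A) (ψ : V →* A)
    (hcomp : ∀ (h : H) (hU : ((1 : G), h) ∈ U) (hV : (h, (1 : K)) ∈ V),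
      (φ ⟨((1 : G), h), hU⟩)⁻¹ = ψ ⟨(h, (1 : K)), hV⟩) :
    ∃ χ : starSub U V →* A,
      ∀ (g : G) (k : K) (h : H) (hU : (g, h) ∈ U) (hV : (h, k) ∈ V)
        (hm : (g, k) ∈ starSub U V),
        χ ⟨(g, k), hm⟩ = φ ⟨(g, h), hU⟩ * ψ ⟨(h, k), hV⟩ := by
  open composableTriples in
  refine ⟨(outerHom U V).liftOfSurjective (outerHom_surjective U V) ⟨_, ker_outerHom_le hcomp⟩,
    fun g k h hU hV _ => ?_⟩
  exact MonoidHom.liftOfRightInverse_comp_apply _ _ _ _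
    (⟨(g, h, k), hU, hV⟩ : composableTriples U V)
end

section
/- Let $A$ be an abelian group, $G,H,K$ groups, $U \le G\times H$, $V \le H \times K$, $\phi : U \to A$, $\psi : V \to A$ homomorphisms with $r(U,\phi) = l(V,\psi)$, i.e. $p_2(U) = p_1(V)$, $k_2(U) = k_1(V)$, and $\phi_2 = \psi_1$. Then $l(U*V, \phi*\psi) = l(U,\phi)$ and $r(U*V,\phi*\psi) = r(V,\psi)$, i.e. $p_1(U*V) = p_1(U)$, $k_1(U*V) = k_1(U)$, $(\phi*\psi)_1 = \phi_1$, and symmetrically on the right. -/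
/-! Every element of `U * V` passes through some `(g, h) ∈ U` and `(h, k) ∈ V`. Equality of the
projections `p₂ U = p₁ V` lets each such `(g, h)` be extended to the right (and each `(h, k)` to the
left), so the outer projections are unchanged. Equality of the kernels `k₂ U = k₁ V` lets us cancel
the middle coordinate: if `(g, h) ∈ U` and `(h, 1) ∈ V`, then `(1, h) ∈ U`, hence `(g, 1) ∈ U`. On
the characters, `(g, 1)` factors through the middle coordinate `1`, where `ψ` is trivial. -/

section StarSub

variable {G H K : Type*} [Group G] [Group H] [Group K] {U : Subgroup (G × H)} {V : Subgroup (H × K)}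

theorem mem_starSub {x : G × K} : x ∈ starSub U V ↔ ∃ h, (x.1, h) ∈ U ∧ (h, x.2) ∈ V :=
  Iff.rfl

theorem mem_p1 {g : G} : g ∈ p1 U ↔ ∃ h, (g, h) ∈ U := by
  simp [p1, Subgroup.mem_map]

theorem mem_p2 {h : H} : h ∈ p2 U ↔ ∃ g, (g, h) ∈ U := by
  simp [p2, Subgroup.mem_map]

theorem mem_k1 {g : G} : g ∈ k1 U ↔ (g, 1) ∈ U :=
  Iff.rfl

theorem mem_k2 {h : H} : h ∈ k2 U ↔ (1, h) ∈ U :=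
  Iff.rfl

theorem p1_starSub (hp : p2 U ≤ p1 V) : p1 (starSub U V) = p1 U := by
  ext g
  simp only [mem_p1, mem_starSub]
  constructor
  · rintro ⟨_, h, hU, -⟩
    exact ⟨h, hU⟩
  · rintro ⟨h, hU⟩
    obtain ⟨k, hV⟩ := mem_p1.1 (hp (mem_p2.2 ⟨g, hU⟩))
    exact ⟨k, h, hU, hV⟩

theorem p2_starSub (hp : p1 V ≤ p2 U) : p2 (starSub U V) = p2 V := by
  ext k
  simp only [mem_p2, mem_starSub]
  constructor
  · rintro ⟨_, h, -, hV⟩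
    exact ⟨h, hV⟩
  · rintro ⟨h, hV⟩
    obtain ⟨g, hU⟩ := mem_p2.1 (hp (mem_p1.2 ⟨k, hV⟩))
    exact ⟨g, h, hU, hV⟩

theorem k1_starSub (hk : k1 V ≤ k2 U) : k1 (starSub U V) = k1 U := by
  ext g
  simp only [mem_k1, mem_starSub]
  constructor
  · rintro ⟨h, hU, hV⟩
    have h_mid : ((1 : G), h) ∈ U := hk hV
    simpa using U.mul_mem hU (U.inv_mem h_mid)
  · exact fun hU => ⟨1, hU, V.one_mem⟩

theorem k2_starSub (hk : k2 U ≤ k1 V) : k2 (starSub U V) = k2 V := by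
  ext k
  simp only [mem_k2, mem_starSub]
  constructor
  · rintro ⟨h, hU, hV⟩
    have h_mid : (h, (1 : K)) ∈ V := hk hU
    simpa using V.mul_mem (V.inv_mem h_mid) hV
  · exact fun hV => ⟨1, U.one_mem, hV⟩

end StarSub

theorem star_invariants_general {G H K A : Type*} [Group G] [Group H] [Group K] [CommGroup A]
    (U : Subgroup (G × H)) (V : Subgroup (H × K)) (φ : U →* A) (ψ : V →* A)
    (hp : p2 U = p1 V) (hk : k2 U = k1 V) :
    p1 (starSub U V) = p1 U ∧ k1 (starSub U V) = k1 U ∧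
    p2 (starSub U V) = p2 V ∧ k2 (starSub U V) = k2 V ∧
    ∀ χ : starSub U V →* A,
      (∀ (g : G) (k : K) (h : H) (hU : (g, h) ∈ U) (hV : (h, k) ∈ V)
        (hm : (g, k) ∈ starSub U V),
        χ ⟨(g, k), hm⟩ = φ ⟨(g, h), hU⟩ * ψ ⟨(h, k), hV⟩) →
      ((∀ (g : G) (hgU : (g, (1 : H)) ∈ U) (hgm : (g, (1 : K)) ∈ starSub U V),
          χ ⟨(g, 1), hgm⟩ = φ ⟨(g, 1), hgU⟩) ∧
       (∀ (k : K) (hkV : ((1 : H), k) ∈ V) (hkm : ((1 : G), k) ∈ starSub U V),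
          χ ⟨(1, k), hkm⟩ = ψ ⟨(1, k), hkV⟩)) := by
  refine ⟨p1_starSub hp.le, k1_starSub hk.ge, p2_starSub hp.ge, k2_starSub hk.le,
    fun χ hχ => ⟨fun g hgU hgm => ?_, fun k hkV hkm => ?_⟩⟩
  · exact (hχ g 1 1 hgU V.one_mem hgm).trans (mul_eq_left.2 (map_one ψ))
  · exact (hχ 1 k 1 U.one_mem hkV hkm).trans (mul_eq_right.2 (map_one φ))

/-- Proposition 1.6(d): if `r(U,φ) = l(V,ψ)`, i.e. `p2 U = p1 V`, `k2 U = k1 V` and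
`φ₂ = ψ₁`, then `l(U*V, φ*ψ) = l(U,φ)` and `r(U*V, φ*ψ) = r(V,ψ)`. -/
theorem star_invariants {G H K A : Type*} [Group G] [Group H] [Group K] [CommGroup A]
    (U : Subgroup (G × H)) (V : Subgroup (H × K)) (φ : U →* A) (ψ : V →* A)
    (hp : p2 U = p1 V) (hk : k2 U = k1 V)
    (hφψ : ∀ (h : H) (hU : ((1 : G), h) ∈ U) (hV : (h, (1 : K)) ∈ V),
      (φ ⟨((1 : G), h), hU⟩)⁻¹ = ψ ⟨(h, (1 : K)), hV⟩) :
    p1 (starSub U V) = p1 U ∧ k1 (starSub U V) = k1 U ∧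
    p2 (starSub U V) = p2 V ∧ k2 (starSub U V) = k2 V ∧
    ∀ χ : starSub U V →* A,
      (∀ (g : G) (k : K) (h : H) (hU : (g, h) ∈ U) (hV : (h, k) ∈ V)
        (hm : (g, k) ∈ starSub U V),
        χ ⟨(g, k), hm⟩ = φ ⟨(g, h), hU⟩ * ψ ⟨(h, k), hV⟩) →
      ((∀ (g : G) (hgU : (g, (1 : H)) ∈ U) (hgm : (g, (1 : K)) ∈ starSub U V),
          χ ⟨(g, 1), hgm⟩ = φ ⟨(g, 1), hgU⟩) ∧
       (∀ (k : K) (hkV : ((1 : H), k) ∈ V) (hkm : ((1 : G), k) ∈ starSub U V),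
          χ ⟨(1, k), hkm⟩ = ψ ⟨(1, k), hkV⟩)) :=
  star_invariants_general U V φ ψ hp hk
end

section
/- Let $G$ be a finite group, $A$ an abelian group, and let $(K,\kappa), (K',\kappa')$ be pairs with $K, K' \trianglelefteq G$, $\kappa : K \to A$ and $\kappa' : K' \to A$ both $G$-stable homomorphisms. If $\kappa|_{K\cap K'} = \kappa'|_{K\cap K'}$, then the function $\kappa\cdot\kappa' : KK' \to A$ given by $kk' \mapsto \kappa(k)\kappa'(k')$ is a well-defined $G$-stable group homomorphism on the normal subgroup $KK'$. -/
open scoped Pointwise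


/-- If `K, K' ⊴ G` with `G`-stable homomorphisms `κ : K → A`, `κ' : K' → A` agreeing on
`K ∩ K'`, then `κ·κ' : KK' → A`, `k k' ↦ κ(k) κ'(k')`, is a well-defined `G`-stable
homomorphism on the normal subgroup `KK' = K ⊔ K'`. -/
theorem kappa_mul_exists {G A : Type*} [Group G] [Finite G] [CommGroup A]
    (K K' : Subgroup G) [hK : K.Normal] [hK' : K'.Normal]
    (κ : K →* A) (κ' : K' →* A)
    (hκ : ∀ (g : G) (k : K), κ ⟨g * k * g⁻¹, hK.conj_mem k k.2 g⟩ = κ k)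
    (hκ' : ∀ (g : G) (k : K'), κ' ⟨g * k * g⁻¹, hK'.conj_mem k k.2 g⟩ = κ' k)
    (hagree : ∀ (x : G) (h1 : x ∈ K) (h2 : x ∈ K'), κ ⟨x, h1⟩ = κ' ⟨x, h2⟩) :
    ∃ ν : (K ⊔ K' : Subgroup G) →* A,
      (∀ (k k' : G) (hk : k ∈ K) (hk' : k' ∈ K') (hm : k * k' ∈ K ⊔ K'),
        ν ⟨k * k', hm⟩ = κ ⟨k, hk⟩ * κ' ⟨k', hk'⟩) ∧
      (∀ (g : G) (x : (K ⊔ K' : Subgroup G)) (hgx : g * x * g⁻¹ ∈ K ⊔ K'),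
        ν ⟨g * x * g⁻¹, hgx⟩ = ν x) := by
  classical
  have hmem : ∀ x : (K ⊔ K' : Subgroup G),
      ∃ q : G × G, q.1 ∈ K ∧ q.2 ∈ K' ∧ q.1 * q.2 = (x : G) := by
    intro x
    have hx : (x : G) ∈ ((K : Set G) * (K' : Set G)) := by
      rw [← Subgroup.normal_mul]; exact x.2
    obtain ⟨k, hk, k', hk', hkk⟩ := hx
    exact ⟨(k, k'), hk, hk', hkk⟩
  choose q hq1 hq2 hq3 using hmem
  set ν0 : (K ⊔ K' : Subgroup G) → A :=
    fun x => κ ⟨(q x).1, hq1 x⟩ * κ' ⟨(q x).2, hq2 x⟩ with hν0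
  have key : ∀ (x : (K ⊔ K' : Subgroup G)) (k k' : G) (hk : k ∈ K) (hk' : k' ∈ K'),
      k * k' = (x : G) → ν0 x = κ ⟨k, hk⟩ * κ' ⟨k', hk'⟩ := by
    intro x k k' hk hk' hkk
    have hab : (q x).1 * (q x).2 = k * k' := by rw [hq3 x, hkk]
    have hzK : k⁻¹ * (q x).1 ∈ K := mul_mem (inv_mem hk) (hq1 x)
    have hzval : k⁻¹ * (q x).1 = k' * (q x).2⁻¹ := by
      rw [inv_mul_eq_iff_eq_mul, ← mul_assoc, ← hab]
      simp [mul_assoc]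
    have hzK' : k⁻¹ * (q x).1 ∈ K' := by
      rw [hzval]; exact mul_mem hk' (inv_mem (hq2 x))
    have hz : κ ⟨k⁻¹ * (q x).1, hzK⟩ = κ' ⟨k⁻¹ * (q x).1, hzK'⟩ := hagree _ _ _
    have e1 : (⟨(q x).1, hq1 x⟩ : K) = ⟨k, hk⟩ * ⟨k⁻¹ * (q x).1, hzK⟩ := by
      ext; simp
    have e2 : (⟨k', hk'⟩ : K') = ⟨k⁻¹ * (q x).1, hzK'⟩ * ⟨(q x).2, hq2 x⟩ := by
      ext; simp [hzval]
    simp only [hν0, e1, map_mul, e2, hz]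
    exact mul_assoc _ _ _
  have hmul : ∀ x y, ν0 (x * y) = ν0 x * ν0 y := by
    intro x y
    set a := (q x).1; set b := (q x).2; set c := (q y).1; set d := (q y).2
    have hcK : b * c * b⁻¹ ∈ K := hK.conj_mem c (hq1 y) b
    have hdecomp : (a * (b * c * b⁻¹)) * (b * d) = ((x * y : (K ⊔ K' : Subgroup G)) : G) := by
      push_cast
      rw [← hq3 x, ← hq3 y]
      group
      rfl
    rw [key (x * y) _ _ (mul_mem (hq1 x) hcK) (mul_mem (hq2 x) (hq2 y)) hdecomp]
    have e1 : (⟨a * (b * c * b⁻¹), mul_mem (hq1 x) hcK⟩ : K)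
        = ⟨a, hq1 x⟩ * ⟨b * c * b⁻¹, hcK⟩ := rfl
    have e2 : (⟨b * d, mul_mem (hq2 x) (hq2 y)⟩ : K')
        = ⟨b, hq2 x⟩ * ⟨d, hq2 y⟩ := rfl
    have e3 : κ ⟨b * c * b⁻¹, hcK⟩ = κ ⟨c, hq1 y⟩ := hκ b ⟨c, hq1 y⟩
    show κ ⟨a * (b * c * b⁻¹), mul_mem (hq1 x) hcK⟩ * κ' ⟨b * d, mul_mem (hq2 x) (hq2 y)⟩ = ν0 x * ν0 y
    simp only [hν0, e1, e2, map_mul, e3]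
    exact (mul_mul_mul_comm _ _ _ _).symm
  refine ⟨MonoidHom.mk' ν0 hmul, ?_, ?_⟩
  · intro k k' hk hk' hm
    exact key ⟨k * k', hm⟩ k k' hk hk' rfl
  · intro g x hgx
    have h1 : g * (q x).1 * g⁻¹ ∈ K := hK.conj_mem _ (hq1 x) g
    have h2 : g * (q x).2 * g⁻¹ ∈ K' := hK'.conj_mem _ (hq2 x) g
    have hd : (g * (q x).1 * g⁻¹) * (g * (q x).2 * g⁻¹) = g * (x : G) * g⁻¹ := by
      rw [← hq3 x]; group
    show ν0 ⟨g * (x : G) * g⁻¹, hgx⟩ = ν0 x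
    rw [key ⟨g * (x : G) * g⁻¹, hgx⟩ _ _ h1 h2 hd]
    have e3 : κ ⟨g * (q x).1 * g⁻¹, h1⟩ = κ ⟨(q x).1, hq1 x⟩ := hκ g ⟨(q x).1, hq1 x⟩
    have e4 : κ' ⟨g * (q x).2 * g⁻¹, h2⟩ = κ' ⟨(q x).2, hq2 x⟩ := hκ' g ⟨(q x).2, hq2 x⟩
    rw [e3, e4]
end

section
/- Let $(P, \le)$ be the poset of pairs $(K,\kappa)$ where $K$ ranges over normal subgroups of a finite group $G$ and $\kappa : K \to A$ is a $G$-stable homomorphism, ordered by $(L,\lambda) \le (K,\kappa)$ iff $L \le K$ and $\kappa|_L = \lambda$. Let $R$ be a commutative ring with free $R$-module $E$ on basis $\{e_{(K,\kappa)}\}$, with multiplication $e_{(K,\kappa)} e_{(L,\lambda)} = e_{(KL,\kappa\lambda)}$ if $\kappa|_{K\cap L} = \lambda|_{K\cap L}$ and $0$ otherwise. Define $f_{(K,\kappa)} = \sum_{(K,\kappa)\le(L,\lambda)} \mu^{\triangleleft}_{K,L}\, e_{(L,\lambda)}$, where $\mu^{\triangleleft}$ is the Möbius function of the poset of normal subgroups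 of $G$. Then the elements $f_{(K,\kappa)}$ are mutually orthogonal idempotents: $f_{(K,\kappa)} f_{(L,\lambda)} = f_{(K,\kappa)}$ if $(K,\kappa) = (L,\lambda)$, and $0$ otherwise; moreover $e_{(K,\kappa)} f_{(L,\lambda)} = f_{(L,\lambda)}$ if $(K,\kappa)\le(L,\lambda)$ and $0$ otherwise. -/
/-!
Write `f_q = ∑_{t ≥ q} μ(q,t) e_t`. Since `e_a e_t = e_{a ∨ t}` (zero when `a` and `t` have no
common upper bound), the coefficient of `e_r` in `e_a f_q` is `∑_{t ≥ q, a ∨ t = r} μ(q,t)`.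
For `a ≤ s` its partial sums over `r ≤ s` collapse, by the defining identity of `μ`, to
`δ(q,s)`, and on a finite poset a function is determined by its sums over all `r ≤ s`; hence
`e_a f_q = [a ≤ q] f_q`. Expanding `f_p` in `f_p f_q` then leaves
`(∑_{p ≤ t ≤ q} μ(p,t)) f_q = δ(p,q) f_q`. The pair `(KL, κλ)` is indeed the join: a common
upper bound of `(K,κ)` and `(L,λ)` agrees with it on `K` and on `L`, hence on the subgroup they
generate.
-/

/-- A pair `(K, κ)` with `K ⊴ G` and `κ : K → A` a `G`-stable homomorphism; these are the
`G`-fixed points of `𝓜_G`. -/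
structure GPair (G A : Type*) [Group G] [CommGroup A] where
  K : Subgroup G
  normal : K.Normal
  kappa : K →* A
  stable : ∀ (g : G) (k : K),
    kappa ⟨g * (k : G) * g⁻¹, normal.conj_mem (k : G) k.2 g⟩ = kappa k

/-- The partial order: `(K,κ) ≤ (L,λ)` iff `K ≤ L` and `λ|_K = κ`. -/
def GPair.le {G A : Type*} [Group G] [CommGroup A] (p q : GPair G A) : Prop :=
  p.K ≤ q.K ∧ ∀ (x : G) (hx : x ∈ p.K) (hx' : x ∈ q.K), q.kappa ⟨x, hx'⟩ = p.kappa ⟨x, hx⟩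

/-- Compatibility: `κ` and `λ` agree on `K ∩ L`. -/
def GPair.compatible {G A : Type*} [Group G] [CommGroup A] (p q : GPair G A) : Prop :=
  ∀ (x : G) (hx : x ∈ p.K) (hx' : x ∈ q.K), p.kappa ⟨x, hx⟩ = q.kappa ⟨x, hx'⟩

open Classical in
/-- `f_{(K,κ)} = ∑_{(K,κ) ≤ (L,λ)} μ^◁_{K,L} e_{(L,λ)}`. -/
noncomputable def fIdem {G A R E : Type*} [Group G] [CommGroup A] [CommRing R]
    [Ring E] [Algebra R E] [Fintype (GPair G A)]
    (e : GPair G A → E) (mu : Subgroup G → Subgroup G → R) (p : GPair G A) : E :=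
  ∑ t : GPair G A, if p.le t then mu p.K t.K • e t else 0

open Finset Classical

section Poset
variable {P : Type*} [PartialOrder P] [Fintype P]

theorem sum_ite_le_eq_add_sum_ite_lt {M : Type*} [AddCommMonoid M] (f : P → M) (s : P) :
    ∑ r, (if r ≤ s then f r else 0) = f s + ∑ r, if r < s then f r else 0 := by
  have hsplit : ∀ r, (if r ≤ s then f r else 0) =
      (if r = s then f r else 0) + if r < s then f r else 0 := fun r => by
    rcases eq_or_ne r s with rfl | hne
    · simp
    · simp [hne, le_iff_eq_or_lt]
  rw [sum_congr rfl fun r _ => hsplit r, sum_add_distrib, sum_ite_eq']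
  simp

theorem eq_of_forall_sum_le_eq {M : Type*} [AddCommGroup M] {c d : P → M}
    (h : ∀ s, ∑ r, (if r ≤ s then c r else 0) = ∑ r, if r ≤ s then d r else 0) : c = d := by
  funext s
  induction s using WellFoundedLT.induction with
  | _ s ih =>
  have hlt : ∑ r, (if r < s then c r else 0) = ∑ r, if r < s then d r else 0 :=
    sum_congr rfl fun r _ => ite_congr rfl (ih r) fun _ => rfl
  simpa [sum_ite_le_eq_add_sum_ite_lt, hlt] using h s

variable {R : Type*} [Ring R]

def IsMoebiusFunction (μ : P → P → R) : Prop :=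
  ∀ q s, q ≤ s → ∑ t, (if q ≤ t ∧ t ≤ s then μ q t else 0) = if q = s then 1 else 0

theorem IsMoebiusFunction.sum_Icc {μ : P → P → R} (hμ : IsMoebiusFunction μ) (q s : P) :
    ∑ t, (if q ≤ t ∧ t ≤ s then μ q t else 0) = if q = s then 1 else 0 := by
  by_cases hqs : q ≤ s
  · exact hμ q s hqs
  · rw [if_neg (by rintro rfl; exact hqs le_rfl)]
    exact sum_eq_zero fun t _ => if_neg fun h => hqs (h.1.trans h.2)

theorem sum_ite_le_and_isLUB_pair {M : Type*} [AddCommMonoid M] {a t s : P}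
    (hjoin : t ≤ s → ∃ r, IsLUB {a, t} r) (has : a ≤ s) (x : M) :
    ∑ r, (if r ≤ s ∧ IsLUB {a, t} r then x else 0) = if t ≤ s then x else 0 := by
  by_cases hts : t ≤ s
  · obtain ⟨j, hj⟩ := hjoin hts
    have hiff : ∀ r, r ≤ s ∧ IsLUB {a, t} r ↔ r = j := fun r =>
      ⟨fun h => h.2.unique hj, by rintro rfl; exact ⟨hj.2 (by simp [upperBounds, has, hts]), hj⟩⟩
    simp [hiff, hts]
  · refine (sum_eq_zero fun r _ => if_neg ?_).trans (if_neg hts).symm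
    rintro ⟨hrs, hr⟩
    exact hts ((hr.1 (by simp)).trans hrs)

/-- Weisner's theorem. -/
theorem sum_moebius_isLUB_pair {μ : P → P → R} (hμ : IsMoebiusFunction μ) {a : P}
    (hjoin : ∀ t s, a ≤ s → t ≤ s → ∃ r, IsLUB {a, t} r) (q r : P) :
    ∑ t, (if q ≤ t ∧ IsLUB {a, t} r then μ q t else 0) = if a ≤ q ∧ q ≤ r then μ q r else 0 := by
  suffices (fun r => ∑ t, (if q ≤ t ∧ IsLUB {a, t} r then μ q t else 0)) =
      fun r => if a ≤ q ∧ q ≤ r then μ q r else 0 from congrFun this r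
  refine eq_of_forall_sum_le_eq fun s => ?_
  by_cases has : a ≤ s
  · calc ∑ r, (if r ≤ s then ∑ t, (if q ≤ t ∧ IsLUB {a, t} r then μ q t else 0) else 0)
        = ∑ t, if q ≤ t then ∑ r, (if r ≤ s ∧ IsLUB {a, t} r then μ q t else 0) else 0 := by
          simp_rw [ite_sum_zero, ← ite_and]
          rw [sum_comm]
          exact sum_congr rfl fun t _ => sum_congr rfl fun r _ => if_congr and_left_comm rfl rfl
      _ = ∑ t, if q ≤ t ∧ t ≤ s then μ q t else 0 := sum_congr rfl fun t _ => by
          rw [sum_ite_le_and_isLUB_pair (hjoin t s has) has, ite_and]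
      _ = if q = s then 1 else 0 := hμ.sum_Icc q s
      _ = ∑ r, if r ≤ s then (if a ≤ q ∧ q ≤ r then μ q r else 0) else 0 := by
          by_cases haq : a ≤ q
          · simp_rw [haq, true_and, ← ite_and, and_comm]
            exact (hμ.sum_Icc q s).symm
          · rw [if_neg (by rintro rfl; exact haq has)]
            exact (sum_eq_zero fun r _ => by simp [haq]).symm
  · have hzero : ∀ r, r ≤ s → ¬ a ≤ r := fun r hrs har => has (har.trans hrs)
    refine (sum_eq_zero fun r _ => ?_).trans (sum_eq_zero fun r _ => ?_).symm
    · refine ite_eq_right_iff.2 fun hrs => sum_eq_zero fun t _ => if_neg ?_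
      exact fun ht => hzero r hrs (ht.2.1 (by simp))
    · exact ite_eq_right_iff.2 fun hrs => if_neg fun h => hzero r hrs (h.1.trans h.2)

end Poset

section Combination
variable {P R E : Type*} [PartialOrder P] [Fintype P] [CommRing R] [Ring E] [Algebra R E]

noncomputable def moebiusCombination (μ : P → P → R) (e : P → E) (q : P) : E :=
  ∑ t, if q ≤ t then μ q t • e t else 0

variable {μ : P → P → R} {e : P → E}

theorem sum_moebius_smul_join (hμ : IsMoebiusFunction μ) {a : P}
    (hjoin : ∀ t s, a ≤ s → t ≤ s → ∃ r, IsLUB {a, t} r) {F : P → E}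
    (hF : ∀ t, F t = ∑ r, if IsLUB {a, t} r then e r else 0) (q : P) :
    ∑ t, (if q ≤ t then μ q t • F t else 0) =
      if a ≤ q then moebiusCombination μ e q else 0 := by
  calc ∑ t, (if q ≤ t then μ q t • F t else 0)
      = ∑ r, (∑ t, if q ≤ t ∧ IsLUB {a, t} r then μ q t else 0) • e r := by
        simp_rw [hF, smul_sum, sum_smul, smul_ite, smul_zero, ite_sum_zero, ← ite_and, ite_smul,
          zero_smul]
        exact sum_comm
    _ = ∑ r, (if a ≤ q ∧ q ≤ r then μ q r else 0) • e r := by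
        simp_rw [sum_moebius_isLUB_pair hμ hjoin]
    _ = if a ≤ q then moebiusCombination μ e q else 0 := by
        by_cases haq : a ≤ q <;> simp [moebiusCombination, haq]

variable (hμ : IsMoebiusFunction μ)
  (hjoin : ∀ p q s : P, p ≤ s → q ≤ s → ∃ r, IsLUB {p, q} r)
  (hmul : ∀ p q, e p * e q = ∑ r, if IsLUB {p, q} r then e r else 0)
include hμ hjoin hmul

theorem mul_moebiusCombination (a q : P) :
    e a * moebiusCombination μ e q = if a ≤ q then moebiusCombination μ e q else 0 := by
  rw [moebiusCombination, mul_sum]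
  simp_rw [mul_ite, mul_zero, mul_smul_comm]
  exact sum_moebius_smul_join hμ (hjoin a) (fun t => hmul a t) q

theorem moebiusCombination_mul (a q : P) :
    moebiusCombination μ e q * e a = if a ≤ q then moebiusCombination μ e q else 0 := by
  rw [moebiusCombination, sum_mul]
  simp_rw [ite_mul, zero_mul, smul_mul_assoc]
  exact sum_moebius_smul_join hμ (hjoin a) (fun t => by rw [hmul, Set.pair_comm]) q

theorem moebiusCombination_mul_moebiusCombination (p q : P) :
    moebiusCombination μ e p * moebiusCombination μ e q =
      if p = q then moebiusCombination μ e p else 0 := by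
  calc moebiusCombination μ e p * moebiusCombination μ e q
      = ∑ t, if p ≤ t then μ p t • (e t * moebiusCombination μ e q) else 0 := by
        rw [moebiusCombination, sum_mul]
        simp_rw [ite_mul, zero_mul, smul_mul_assoc]
    _ = (∑ t, if p ≤ t ∧ t ≤ q then μ p t else 0) • moebiusCombination μ e q := by
        simp_rw [mul_moebiusCombination hμ hjoin hmul, sum_smul, ite_and, ite_smul, smul_ite,
          zero_smul, smul_zero]
    _ = if p = q then moebiusCombination μ e p else 0 := by
        rw [hμ.sum_Icc]
        split_ifs with hpq
        · rw [hpq, one_smul]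
        · rw [zero_smul]

end Combination

namespace GPair
variable {G A : Type*} [Group G] [CommGroup A]

instance : PartialOrder (GPair G A) where
  le := GPair.le
  le_refl _ := ⟨le_rfl, fun _ _ _ => rfl⟩
  le_trans _ _ _ hpq hqr :=
    ⟨hpq.1.trans hqr.1, fun x hx hx' => (hqr.2 x (hpq.1 hx) hx').trans (hpq.2 x hx (hpq.1 hx))⟩
  le_antisymm p q hpq hqp := by
    obtain ⟨K, hK, κ, hκ⟩ := p
    obtain ⟨K', hK', κ', hκ'⟩ := q
    obtain rfl : K = K' := le_antisymm hpq.1 hqp.1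
    obtain rfl : κ = κ' := MonoidHom.ext fun x => (hpq.2 x x.2 x.2).symm
    rfl

theorem compatible_of_le {p q s : GPair G A} (hp : p ≤ s) (hq : q ≤ s) : p.compatible q :=
  fun x hx hx' => (hp.2 x hx (hp.1 hx)).symm.trans (hq.2 x hx' (hp.1 hx))

theorem isLUB_of_K_eq_sup {p q r : GPair G A} (hK : r.K = p.K ⊔ q.K) (hp : p ≤ r) (hq : q ≤ r) :
    IsLUB {p, q} r := by
  refine ⟨by simp [upperBounds, hp, hq], fun s hs => ?_⟩
  obtain ⟨hps, hqs⟩ : p ≤ s ∧ q ≤ s := by simpa [upperBounds] using hs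
  have hcr : Subgroup.closure (p.K ∪ q.K : Set G) ≤ r.K := by
    rw [hK, Subgroup.sup_eq_closure]
  have hcs : Subgroup.closure (p.K ∪ q.K : Set G) ≤ s.K := by
    rw [← Subgroup.sup_eq_closure]; exact sup_le hps.1 hqs.1
  have hagree : ∀ x (hx : x ∈ Subgroup.closure (p.K ∪ q.K : Set G)),
      s.kappa ⟨x, hcs hx⟩ = r.kappa ⟨x, hcr hx⟩ := by
    intro x hx
    induction hx using Subgroup.closure_induction with
    | mem x hx =>
      rcases hx with hx | hx
      · exact (hps.2 x hx _).trans (hp.2 x hx _).symm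
      · exact (hqs.2 x hx _).trans (hq.2 x hx _).symm
    | one => exact (map_one s.kappa).trans (map_one r.kappa).symm
    | mul x y _ _ ihx ihy =>
      exact (map_mul s.kappa ⟨x, _⟩ ⟨y, _⟩).trans <| (congrArg₂ _ ihx ihy).trans
        (map_mul r.kappa ⟨x, _⟩ ⟨y, _⟩).symm
    | inv x _ ih =>
      exact (map_inv s.kappa ⟨x, _⟩).trans <| (congrArg _ ih).trans (map_inv r.kappa ⟨x, _⟩).symm
  refine ⟨hK ▸ sup_le hps.1 hqs.1, fun x hx hx' => ?_⟩
  rw [hK, Subgroup.sup_eq_closure] at hx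
  exact hagree x hx

variable {E : Type*} [Ring E] [Fintype (GPair G A)] {e : GPair G A → E}

theorem mul_eq_sum_isLUB (hmul0 : ∀ p q : GPair G A, ¬ p.compatible q → e p * e q = 0)
    (hmul1 : ∀ p q : GPair G A, p.compatible q →
      ∃ r : GPair G A, r.K = p.K ⊔ q.K ∧ p.le r ∧ q.le r ∧ e p * e q = e r)
    (p q : GPair G A) : e p * e q = ∑ r, if IsLUB {p, q} r then e r else 0 := by
  by_cases hpq : p.compatible q
  · obtain ⟨j, hK, hpj, hqj, hj⟩ := hmul1 p q hpq
    have hiff : ∀ r, IsLUB {p, q} r ↔ r = j :=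
      fun r => ⟨fun h => h.unique (isLUB_of_K_eq_sup hK hpj hqj),
        by rintro rfl; exact isLUB_of_K_eq_sup hK hpj hqj⟩
    simp [hiff, hj]
  · rw [hmul0 p q hpq]
    refine (sum_eq_zero fun r _ => if_neg fun hr => hpq ?_).symm
    exact compatible_of_le (hr.1 (by simp)) (hr.1 (by simp))

end GPair

open Classical in
theorem f_orthogonal_idempotents_general {G A R E : Type*} [Group G] [CommGroup A]
    [CommRing R] [Ring E] [Algebra R E] [Fintype (GPair G A)]
    (e : GPair G A → E)
    (hmul0 : ∀ p q : GPair G A, ¬ p.compatible q → e p * e q = 0)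
    (hmul1 : ∀ p q : GPair G A, p.compatible q →
      ∃ r : GPair G A, r.K = p.K ⊔ q.K ∧ p.le r ∧ q.le r ∧ e p * e q = e r)
    (mu : Subgroup G → Subgroup G → R)
    (hmu : ∀ p q : GPair G A, p.le q →
      (∑ r : GPair G A, if p.le r ∧ r.le q then mu p.K r.K else 0) =
        if p = q then 1 else 0) :
    ∀ p q : GPair G A,
      (fIdem e mu p * fIdem e mu q = if p = q then fIdem e mu p else 0) ∧
      (e p * fIdem e mu q = if p.le q then fIdem e mu q else 0) ∧
      (fIdem e mu q * e p = if p.le q then fIdem e mu q else 0) := by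
  have hμ : IsMoebiusFunction fun p q : GPair G A => mu p.K q.K := hmu
  have hjoin : ∀ p q s : GPair G A, p ≤ s → q ≤ s → ∃ r, IsLUB {p, q} r := fun p q s hp hq =>
    let ⟨r, hK, hpr, hqr, _⟩ := hmul1 p q (GPair.compatible_of_le hp hq)
    ⟨r, GPair.isLUB_of_K_eq_sup hK hpr hqr⟩
  have hmul := GPair.mul_eq_sum_isLUB hmul0 hmul1
  have hf : fIdem e mu = moebiusCombination (fun p q => mu p.K q.K) e := rfl
  intro p q
  rw [hf]
  exact ⟨moebiusCombination_mul_moebiusCombination hμ hjoin hmul p q,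
    mul_moebiusCombination hμ hjoin hmul p q, moebiusCombination_mul hμ hjoin hmul p q⟩

open Classical in
/-- Proposition 4.4: in the free `R`-module `E` on the basis `e_{(K,κ)}` with multiplication
`e_{(K,κ)} e_{(L,λ)} = e_{(KL, κλ)}` if `κ, λ` agree on `K ∩ L` and `0` otherwise, the
elements `f_{(K,κ)}` (defined by Möbius inversion along the poset of normal subgroups)
are mutually orthogonal idempotents, and `e_{(K,κ)} f_{(L,λ)} = f_{(L,λ)} e_{(K,κ)}`
equals `f_{(L,λ)}` if `(K,κ) ≤ (L,λ)` and `0` otherwise. -/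
theorem f_orthogonal_idempotents {G A R E : Type*} [Group G] [Finite G] [CommGroup A]
    [CommRing R] [Ring E] [Algebra R E] [Fintype (GPair G A)]
    (e : GPair G A → E) (hbasis : LinearIndependent R e)
    (hmul0 : ∀ p q : GPair G A, ¬ p.compatible q → e p * e q = 0)
    (hmul1 : ∀ p q : GPair G A, p.compatible q →
      ∃ r : GPair G A, r.K = p.K ⊔ q.K ∧ p.le r ∧ q.le r ∧ e p * e q = e r)
    (mu : Subgroup G → Subgroup G → R)
    (hmu : ∀ p q : GPair G A, p.le q →
      (∑ r : GPair G A, if p.le r ∧ r.le q then mu p.K r.K else 0) =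
        if p = q then 1 else 0) :
    ∀ p q : GPair G A,
      (fIdem e mu p * fIdem e mu q = if p = q then fIdem e mu p else 0) ∧
      (e p * fIdem e mu q = if p.le q then fIdem e mu q else 0) ∧
      (fIdem e mu q * e p = if p.le q then fIdem e mu q else 0) :=
  f_orthogonal_idempotents_general e hmul0 hmul1 mu hmu
end

section
/- Let $G$, $H$ be finite groups, $A$ an abelian group, and suppose $(U,\phi)$, with $U \le G\times H$ and $\phi : U \to A$, satisfies $p_1(U) = G$, $p_2(U) = H$. Let $(K,\kappa) = (k_1(U),\phi_1)$ and $(L,\lambda) = (k_2(U),\phi_2)$. If $(K',\kappa')$ is another pair with $K' \trianglelefteq G$, $\kappa'$ $G$-stable, and $K < K'$, and if $(V,\psi)$ is a pair with $p_1(V)=G$, $p_2(V)=H$, $l_0(V,\psi) = (K',\kappa')$, and $r_0(V,\psi) = (L',\lambda')$ with $(L,\lambda) \le (L',\lambda')$, then $L < L'$. -/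
open Subgroup

section Goursat

variable {G H : Type*} [Group G] [Group H] {U : Subgroup (G × H)}

lemma k1_eq_goursatFst (U : Subgroup (G × H)) : k1 U = U.goursatFst := by
  ext; simp [k1]

lemma k2_eq_goursatSnd (U : Subgroup (G × H)) : k2 U = U.goursatSnd := by
  ext; simp [k2]

lemma surjective_fst_of_p1_eq_top (hU : p1 U = ⊤) :
    Function.Surjective (Prod.fst ∘ U.subtype) := by
  intro g
  obtain ⟨x, hx, rfl⟩ : g ∈ p1 U := hU ▸ mem_top g
  exact ⟨⟨x, hx⟩, rfl⟩

lemma surjective_snd_of_p2_eq_top (hU : p2 U = ⊤) :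
    Function.Surjective (Prod.snd ∘ U.subtype) := by
  intro h
  obtain ⟨x, hx, rfl⟩ : h ∈ p2 U := hU ▸ mem_top h
  exact ⟨⟨x, hx⟩, rfl⟩

lemma index_k1_eq_index_k2 (hU1 : p1 U = ⊤) (hU2 : p2 U = ⊤) :
    (k1 U).index = (k2 U).index := by
  have hfst := surjective_fst_of_p1_eq_top hU1
  have hsnd := surjective_snd_of_p2_eq_top hU2
  have := normal_goursatFst hfst
  have := normal_goursatSnd hsnd
  obtain ⟨e, -⟩ := goursat_surjective hfst hsnd
  rw [index_eq_card, index_eq_card, k1_eq_goursatFst, k2_eq_goursatSnd]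
  exact Nat.card_congr e.toEquiv

end Goursat

theorem k2_lt_of_k1_lt_general {G H : Type*} [Group G] [Group H]
    [Finite G]
    (U V : Subgroup (G × H))
    (hU1 : p1 U = ⊤) (hU2 : p2 U = ⊤) (hV1 : p1 V = ⊤) (hV2 : p2 V = ⊤)
    (hKlt : k1 U < k1 V) (hLle : k2 U ≤ k2 V) :
    k2 U < k2 V := by
  refine hLle.lt_of_ne fun hL => ?_
  have hindex := index_strictAnti hKlt
  rw [index_k1_eq_index_k2 hU1 hU2, index_k1_eq_index_k2 hV1 hV2, hL] at hindex
  exact hindex.false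

/-- If `(U,φ)` and `(V,ψ)` both have full projections on `G` and `H`, `k1 U < k1 V`,
and `r₀(U,φ) ≤ r₀(V,ψ)` (so `k2 U ≤ k2 V` and `ψ₂` restricts to `φ₂`), then
`k2 U < k2 V`. -/
theorem k2_lt_of_k1_lt {G H A : Type*} [Group G] [Group H] [CommGroup A]
    [Finite G] [Finite H]
    (U V : Subgroup (G × H)) (φ : U →* A) (ψ : V →* A)
    (hU1 : p1 U = ⊤) (hU2 : p2 U = ⊤) (hV1 : p1 V = ⊤) (hV2 : p2 V = ⊤)
    (hKlt : k1 U < k1 V) (hLle : k2 U ≤ k2 V)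
    (hres : ∀ (h : H) (hu : ((1 : G), h) ∈ U) (hv : ((1 : G), h) ∈ V),
      (φ ⟨((1 : G), h), hu⟩)⁻¹ = (ψ ⟨((1 : G), h), hv⟩)⁻¹) :
    k2 U < k2 V :=
  k2_lt_of_k1_lt_general U V hU1 hU2 hV1 hV2 hKlt hLle
end

section
/- Let $G$, $H$ be finite groups, $A$ an abelian group, $K \trianglelefteq G$ and $L \trianglelefteq H$ with $\kappa: K \to A$, $\lambda: L \to A$ faithful $G$-stable (resp. $H$-stable) homomorphisms (so $K \le Z(G)$, $L \le Z(H)$). Let $\alpha \in Z^2(G/K, K)$ and $\beta \in Z^2(H/L, L)$ describe the central extensions $1\to K\to G\to G/K\to 1$ and $1\to L\to H\to H/L\to 1$. Then the following are equivalent: (i) there exists $U \le G \times H$ and a homomorphism $\phi : U \to A$ with $p_1(U)=G$, $p_2(U)=H$, $k_1(U)=K$, $k_2(U)=L$, $\phi_1 = \kappa$, $\phi_2 = \lambda$; (ii) there exists an isomorphism $\eta : H/L \to G/K$ such that $[\kappa\circ\alpha] = [\lambda\circ\beta\circ(\eta^{-1}\times\eta^{-1})]$ in $H^2(G/K, \mathrm{tor}\,A)$.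 -/
/-- A 2-cocycle condition (for trivial actions). -/
def IsCocycle {Q B : Type*} [Group Q] [Group B] (α : Q → Q → B) : Prop :=
  ∀ x y z, α x y * α (x * y) z = α y z * α x (y * z)

/-- A cocycle `α ∈ Z²(G/K, K)` describes the central extension `1 → K → G → G/K → 1` if
there is a section `σ` of the quotient map with `σ(x) σ(y) = α(x,y) σ(xy)`. -/
def Describes {G : Type*} [Group G] (K : Subgroup G) [K.Normal]
    (α : G ⧸ K → G ⧸ K → K) : Prop :=
  ∃ σ : G ⧸ K → G, (∀ x, (QuotientGroup.mk (σ x) : G ⧸ K) = x) ∧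
    ∀ x y, σ x * σ y = (α x y : G) * σ (x * y)

open QuotientGroup Function

lemma Subgroup.le_center_of_injective_of_conj_eq {G A : Type*} [Group G]
    (K : Subgroup G) [hK : K.Normal] (κ : K → A) (hinj : Injective κ)
    (hst : ∀ (g : G) (k : K), κ ⟨g * k * g⁻¹, hK.conj_mem k k.2 g⟩ = κ k) :
    K ≤ Subgroup.center G := by
  intro k hk
  refine Subgroup.mem_center_iff.mpr fun g => ?_
  have hconj : g * k * g⁻¹ = k := congrArg Subtype.val (hinj (hst g ⟨k, hk⟩))
  exact mul_inv_eq_iff_eq_mul.mp hconj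

section KerPart

variable {G : Type*} [Group G] {K : Subgroup G} [K.Normal] {σ : G ⧸ K → G}

lemma mul_inv_section_mem (hσ : ∀ x, (σ x : G ⧸ K) = x) (g : G) : g * (σ g)⁻¹ ∈ K := by
  rw [← QuotientGroup.eq_one_iff, QuotientGroup.mk_mul, QuotientGroup.mk_inv, hσ, mul_inv_cancel]

def kerPart (hσ : ∀ x, (σ x : G ⧸ K) = x) (g : G) : K :=
  ⟨g * (σ g)⁻¹, mul_inv_section_mem hσ g⟩

variable {α : G ⧸ K → G ⧸ K → K} (hσ : ∀ x, (σ x : G ⧸ K) = x)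
  (hσα : ∀ x y, σ x * σ y = α x y * σ (x * y))
include hσα

lemma section_one : σ 1 = α 1 1 := by
  simpa using hσα 1 1

lemma kerPart_of_mem {k : G} (hk : k ∈ K) : kerPart hσ k = ⟨k, hk⟩ * (α 1 1)⁻¹ :=
  Subtype.ext (by simp [kerPart, (QuotientGroup.eq_one_iff k).mpr hk, section_one hσα])

lemma kerPart_one : kerPart hσ 1 = (α 1 1)⁻¹ :=
  Subtype.ext (by simp [kerPart, section_one hσα])

lemma kerPart_mul (hK : K ≤ Subgroup.center G) (g g' : G) :
    kerPart hσ (g * g') = kerPart hσ g * kerPart hσ g' * α (g : G ⧸ K) (g' : G ⧸ K) := by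
  apply Subtype.ext
  set x : G ⧸ K := QuotientGroup.mk g
  set y : G ⧸ K := QuotientGroup.mk g'
  have hσxy : σ (x * y) = (α x y : G)⁻¹ * (σ x * σ y) :=
    eq_inv_mul_of_mul_eq (hσα x y).symm
  have hcomm : (σ x)⁻¹ * (g' * (σ y)⁻¹) = g' * (σ y)⁻¹ * (σ x)⁻¹ :=
    Subgroup.mem_center_iff.mp (hK (mul_inv_section_mem hσ g')) _
  calc g * g' * (σ (x * y))⁻¹ = g * ((σ x)⁻¹ * (g' * (σ y)⁻¹)) * α x y := by
        rw [hσxy, hcomm]; group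
    _ = g * (σ x)⁻¹ * (g' * (σ y)⁻¹) * α x y := by group

end KerPart

section Linked

variable {G H : Type*} [Group G] [Group H] (K : Subgroup G) (L : Subgroup H) [K.Normal] [L.Normal]

def linkedSubgroup (η : H ⧸ L ≃* G ⧸ K) : Subgroup (G × H) :=
  ((mk' K).comp (MonoidHom.fst G H)).eqLocus ((η.toMonoidHom.comp (mk' L)).comp (MonoidHom.snd G H))

variable {K L} {η : H ⧸ L ≃* G ⧸ K}

lemma mem_linkedSubgroup {p : G × H} :
    p ∈ linkedSubgroup K L η ↔ (p.1 : G ⧸ K) = η p.2 :=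
  Iff.rfl

lemma p1_linkedSubgroup : p1 (linkedSubgroup K L η) = ⊤ := by
  refine eq_top_iff.mpr fun g _ => ?_
  obtain ⟨h, hh⟩ := mk_surjective (η.symm g)
  exact ⟨(g, h), by simp [mem_linkedSubgroup, hh], rfl⟩

lemma p2_linkedSubgroup : p2 (linkedSubgroup K L η) = ⊤ := by
  refine eq_top_iff.mpr fun h _ => ?_
  obtain ⟨g, hg⟩ := mk_surjective (η h)
  exact ⟨(g, h), hg, rfl⟩

lemma k1_linkedSubgroup : k1 (linkedSubgroup K L η) = K := by
  ext g
  simp [k1, mem_linkedSubgroup]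

lemma k2_linkedSubgroup : k2 (linkedSubgroup K L η) = L := by
  ext h
  simp [k2, mem_linkedSubgroup, eq_comm (a := (1 : G ⧸ K))]

lemma exists_eq_linkedSubgroup {U : Subgroup (G × H)} (hp1 : p1 U = ⊤) (hp2 : p2 U = ⊤)
    (hk1 : k1 U = K) (hk2 : k2 U = L) : ∃ η : H ⧸ L ≃* G ⧸ K, U = linkedSubgroup K L η := by
  have hI₁ : Surjective (Prod.fst ∘ U.subtype) := fun g => by
    obtain ⟨u, hu, rfl⟩ := Subgroup.mem_map.mp (hp1 ▸ Subgroup.mem_top g : g ∈ p1 U)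
    exact ⟨⟨u, hu⟩, rfl⟩
  have hI₂ : Surjective (Prod.snd ∘ U.subtype) := fun h => by
    obtain ⟨u, hu, rfl⟩ := Subgroup.mem_map.mp (hp2 ▸ Subgroup.mem_top h : h ∈ p2 U)
    exact ⟨⟨u, hu⟩, rfl⟩
  have hK : U.goursatFst = K := by ext g; rw [Subgroup.mem_goursatFst, ← hk1]; rfl
  have hL : U.goursatSnd = L := by ext h; rw [Subgroup.mem_goursatSnd, ← hk2]; rfl
  subst hK hL
  obtain ⟨e, he⟩ := Subgroup.goursat_surjective hI₁ hI₂
  rw [MonoidHom.range_comp, Subgroup.range_subtype] at he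
  have hker : ((mk' U.goursatFst).prodMap (mk' U.goursatSnd)).ker ≤ U := by
    rw [MonoidHom.ker_prodMap, ker_mk', ker_mk']
    exact Subgroup.goursatFst_prod_goursatSnd_le U
  refine ⟨e.symm, ?_⟩
  ext ⟨g, h⟩
  conv_lhs => rw [← Subgroup.comap_map_eq_self hker, Subgroup.mem_comap, he]
  rw [mem_linkedSubgroup, MonoidHom.mem_graph, MulEquiv.eq_symm_apply]
  rfl

end Linked

section Linkage

variable {G H A : Type*} [Group G] [Group H] [CommGroup A] {K : Subgroup G} {L : Subgroup H}
  [K.Normal] [L.Normal] (κ : K →* A) (lam : L →* A) {α : G ⧸ K → G ⧸ K → K}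
  {β : H ⧸ L → H ⧸ L → L} {σ : G ⧸ K → G} {τ : H ⧸ L → H}
  (hσ : ∀ x, (σ x : G ⧸ K) = x) (hτ : ∀ x, (τ x : H ⧸ L) = x)
  (hσα : ∀ x y, σ x * σ y = α x y * σ (x * y)) (hτβ : ∀ x y, τ x * τ y = β x y * τ (x * y))
  (η : H ⧸ L ≃* G ⧸ K)

include hσ hτ in
lemma section_pair_mem_linkedSubgroup (x : G ⧸ K) :
    (σ x, τ (η.symm x)) ∈ linkedSubgroup K L η := by
  rw [mem_linkedSubgroup, hσ, hτ, MulEquiv.apply_symm_apply]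

include hσ hτ hσα hτβ in
lemma exists_torsion_cochain_of_linking [Finite G] [Finite H] (φ : linkedSubgroup K L η →* A)
    (hφ1 : ∀ (g : G) (hg : g ∈ K) (hu : (g, (1 : H)) ∈ linkedSubgroup K L η),
      φ ⟨(g, 1), hu⟩ = κ ⟨g, hg⟩)
    (hφ2 : ∀ (h : H) (hh : h ∈ L) (hu : ((1 : G), h) ∈ linkedSubgroup K L η),
      (φ ⟨(1, h), hu⟩)⁻¹ = lam ⟨h, hh⟩) :
    ∃ μ : G ⧸ K → A, (∀ x, μ x ∈ CommGroup.torsion A) ∧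
      ∀ x y, (κ (α x y) : A) = lam (β (η.symm x) (η.symm y)) * μ x * μ y * (μ (x * y))⁻¹ := by
  let s : G ⧸ K → linkedSubgroup K L η := fun x =>
    ⟨(σ x, τ (η.symm x)), section_pair_mem_linkedSubgroup hσ hτ η x⟩
  refine ⟨fun x => φ (s x), fun x => φ.isOfFinOrder (isOfFinOrder_of_finite _), fun x y => ?_⟩
  have hαU : ((α x y : G), (1 : H)) ∈ linkedSubgroup K L η := k1_linkedSubgroup.ge (α x y).2
  have hβU : ((1 : G), (β (η.symm x) (η.symm y) : H)) ∈ linkedSubgroup K L η :=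
    k2_linkedSubgroup.ge (β _ _).2
  have hs : s x * s y = ⟨_, hαU⟩ * ⟨_, hβU⟩ * s (x * y) :=
    Subtype.ext (Prod.ext (by simp [s, hσα]) (by simp [s, hτβ]))
  have hφs : φ (s x) * φ (s y)
      = κ (α x y) * (lam (β (η.symm x) (η.symm y)))⁻¹ * φ (s (x * y)) := by
    rw [← map_mul, hs, map_mul, map_mul, hφ1 _ (α x y).2, ← hφ2 _ (β _ _).2, inv_inv]
  rw [mul_assoc _ (φ (s x)), hφs]
  simp [mul_comm, mul_left_comm, mul_assoc]

variable {η} (hK : K ≤ Subgroup.center G) (hL : L ≤ Subgroup.center H) (μ : G ⧸ K → A)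
  (hrel : ∀ x y, (κ (α x y) : A) = lam (β (η.symm x) (η.symm y)) * μ x * μ y * (μ (x * y))⁻¹)

def linkingHom : linkedSubgroup K L η →* A :=
  MonoidHom.mk' (fun u => κ (kerPart hσ u.1.1) * (lam (kerPart hτ u.1.2))⁻¹ * μ u.1.1) <| by
    rintro ⟨⟨g, h⟩, hu⟩ ⟨⟨g', h'⟩, hu'⟩
    have hh : (h : H ⧸ L) = η.symm g := by rw [mem_linkedSubgroup.mp hu, η.symm_apply_apply]
    have hh' : (h' : H ⧸ L) = η.symm g' := by rw [mem_linkedSubgroup.mp hu', η.symm_apply_apply]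
    simp only [Subgroup.coe_mul, Prod.fst_mul, Prod.snd_mul, kerPart_mul hσ hσα hK,
      kerPart_mul hτ hτβ hL, map_mul, QuotientGroup.mk_mul]
    rw [hh, hh', hrel]
    apply Additive.ofMul.injective
    simp only [ofMul_mul, ofMul_inv]
    abel

include hrel in
lemma linkingHom_inl (g : G) (hg : g ∈ K) (hu : (g, (1 : H)) ∈ linkedSubgroup K L η) :
    linkingHom κ lam hσ hτ hσα hτβ hK hL μ hrel ⟨(g, 1), hu⟩ = κ ⟨g, hg⟩ := by
  have hrel₁ := hrel 1 1
  simp only [map_one, mul_one] at hrel₁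
  simp [linkingHom, kerPart_of_mem hσ hσα hg, kerPart_one hτ hτβ,
    (QuotientGroup.eq_one_iff g).mpr hg, hrel₁, mul_comm, mul_left_comm]

include hrel in
lemma linkingHom_inr (h : H) (hh : h ∈ L) (hu : ((1 : G), h) ∈ linkedSubgroup K L η) :
    (linkingHom κ lam hσ hτ hσα hτβ hK hL μ hrel ⟨(1, h), hu⟩)⁻¹ = lam ⟨h, hh⟩ := by
  have hrel₁ := hrel 1 1
  simp only [map_one, mul_one] at hrel₁
  simp [linkingHom, kerPart_one hσ hσα, kerPart_of_mem hτ hτβ hh, hrel₁, mul_comm, mul_left_comm,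
    mul_assoc]

end Linkage

theorem linkage_criterion_general {G H A : Type*} [Group G] [Group H] [CommGroup A]
    [Finite G] [Finite H]
    (K : Subgroup G) (L : Subgroup H) [hKn : K.Normal] [hLn : L.Normal]
    (κ : K →* A) (lam : L →* A)
    (hκinj : Function.Injective κ) (hlaminj : Function.Injective lam)
    (hκst : ∀ (g : G) (k : K), κ ⟨g * k * g⁻¹, hKn.conj_mem k k.2 g⟩ = κ k)
    (hlamst : ∀ (h : H) (l : L), lam ⟨h * l * h⁻¹, hLn.conj_mem l l.2 h⟩ = lam l)
    (α : G ⧸ K → G ⧸ K → K) (β : H ⧸ L → H ⧸ L → L)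
    (hαd : Describes K α) (hβd : Describes L β) :
    (∃ (U : Subgroup (G × H)) (φ : U →* A),
        p1 U = ⊤ ∧ p2 U = ⊤ ∧ k1 U = K ∧ k2 U = L ∧
        (∀ (g : G) (hg : g ∈ K) (hu : (g, (1 : H)) ∈ U),
          φ ⟨(g, 1), hu⟩ = κ ⟨g, hg⟩) ∧
        (∀ (h : H) (hh : h ∈ L) (hu : ((1 : G), h) ∈ U),
          (φ ⟨(1, h), hu⟩)⁻¹ = lam ⟨h, hh⟩))
    ↔
    (∃ η : (H ⧸ L) ≃* (G ⧸ K), ∃ μ : G ⧸ K → A,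
        (∀ x, μ x ∈ CommGroup.torsion A) ∧
        ∀ x y, (κ (α x y) : A) =
          lam (β (η.symm x) (η.symm y)) * μ x * μ y * (μ (x * y))⁻¹) := by
  obtain ⟨σ, hσ, hσα⟩ := hαd
  obtain ⟨τ, hτ, hτβ⟩ := hβd
  constructor
  · rintro ⟨U, φ, hp1, hp2, hk1, hk2, hφ1, hφ2⟩
    obtain ⟨η, rfl⟩ := exists_eq_linkedSubgroup hp1 hp2 hk1 hk2
    exact ⟨η, exists_torsion_cochain_of_linking κ lam hσ hτ hσα hτβ η φ hφ1 hφ2⟩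
  · rintro ⟨η, μ, -, hrel⟩
    have hK := K.le_center_of_injective_of_conj_eq κ hκinj hκst
    have hL := L.le_center_of_injective_of_conj_eq lam hlaminj hlamst
    exact ⟨linkedSubgroup K L η, linkingHom κ lam hσ hτ hσα hτβ hK hL μ hrel,
      p1_linkedSubgroup, p2_linkedSubgroup, k1_linkedSubgroup, k2_linkedSubgroup,
      linkingHom_inl κ lam hσ hτ hσα hτβ hK hL μ hrel,
      linkingHom_inr κ lam hσ hτ hσα hτβ hK hL μ hrel⟩

/-- Proposition 5.3 (linkage criterion): for finite groups `G`, `H`, normal subgroups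
`K ⊴ G`, `L ⊴ H` with faithful `G`- resp. `H`-stable homomorphisms `κ : K → A`,
`λ : L → A`, and cocycles `α`, `β` describing the central extensions, the following are
equivalent: (i) there is a pair `(U, φ)` with `l(U,φ) = (G,K,κ)` and `r(U,φ) = (H,L,λ)`;
(ii) there is an isomorphism `η : H/L → G/K` with
`[κ∘α] = [λ∘β∘(η⁻¹ × η⁻¹)]` in `H²(G/K, tor A)`. -/
theorem linkage_criterion {G H A : Type*} [Group G] [Group H] [CommGroup A]
    [Finite G] [Finite H]
    (K : Subgroup G) (L : Subgroup H) [hKn : K.Normal] [hLn : L.Normal]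
    (κ : K →* A) (lam : L →* A)
    (hκinj : Function.Injective κ) (hlaminj : Function.Injective lam)
    (hκst : ∀ (g : G) (k : K), κ ⟨g * k * g⁻¹, hKn.conj_mem k k.2 g⟩ = κ k)
    (hlamst : ∀ (h : H) (l : L), lam ⟨h * l * h⁻¹, hLn.conj_mem l l.2 h⟩ = lam l)
    (α : G ⧸ K → G ⧸ K → K) (β : H ⧸ L → H ⧸ L → L)
    (hα : IsCocycle α) (hβ : IsCocycle β)
    (hαd : Describes K α) (hβd : Describes L β) :
    (∃ (U : Subgroup (G × H)) (φ : U →* A),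
        p1 U = ⊤ ∧ p2 U = ⊤ ∧ k1 U = K ∧ k2 U = L ∧
        (∀ (g : G) (hg : g ∈ K) (hu : (g, (1 : H)) ∈ U),
          φ ⟨(g, 1), hu⟩ = κ ⟨g, hg⟩) ∧
        (∀ (h : H) (hh : h ∈ L) (hu : ((1 : G), h) ∈ U),
          (φ ⟨(1, h), hu⟩)⁻¹ = lam ⟨h, hh⟩))
    ↔
    (∃ η : (H ⧸ L) ≃* (G ⧸ K), ∃ μ : G ⧸ K → A,
        (∀ x, μ x ∈ CommGroup.torsion A) ∧
        ∀ x y, (κ (α x y) : A) =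
          lam (β (η.symm x) (η.symm y)) * μ x * μ y * (μ (x * y))⁻¹) :=
  linkage_criterion_general K L (hKn := hKn) (hLn := hLn) κ lam hκinj hlaminj hκst hlamst α β hαd
    hβd
end

section
/- Let $G$ be a finite group, $K \le Z(G)$, $A$ an abelian group, $\kappa : K \to A$ a faithful homomorphism, and $\alpha \in Z^2(G/K, K)$ a cocycle describing the central extension $1 \to K \to G \to G/K \to 1$. Let $\mu : K \to A$ be any homomorphism that is trivial on $\tilde K := K \cap G'$ (where $G'$ is the derived subgroup). Then the cohomology class $[\mu\circ\alpha] \in H^2(G/K, \mathrm{tor}\,A)$ is trivial, provided every homomorphism from $K/\tilde K$ to $A$ extends to a homomorphism from $G/\tilde K$ to $A$ (which holds e.g. if $A$ is divisible on torsion). -/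
theorem MonoidHom.map_factor_set_eq_coboundary {G Q A : Type*} [Group G] [Mul Q] [CommGroup A]
    {K : Subgroup G} {α : Q → Q → K} {σ : Q → G}
    (hσ : ∀ x y, σ x * σ y = (α x y : G) * σ (x * y)) (ν : G →* A) (x y : Q) :
    ν (α x y) = ν (σ x) * ν (σ y) * (ν (σ (x * y)))⁻¹ := by
  rw [eq_mul_inv_iff_mul_eq, ← map_mul, ← map_mul, hσ]

theorem MonoidHom.mem_torsion_of_finite {G A : Type*} [Group G] [Finite G] [CommGroup A]
    (ν : G →* A) (g : G) : ν g ∈ CommGroup.torsion A :=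
  ν.isOfFinOrder (isOfFinOrder_of_finite g)

theorem mu_alpha_coboundary_general {G A : Type*} [Group G] [Finite G] [CommGroup A]
    (K : Subgroup G) [hKn : K.Normal]
    (α : G ⧸ K → G ⧸ K → K) (hαd : Describes K α)
    (μ : K →* A)
    (hμtriv : ∀ (x : G) (h1 : x ∈ K), x ∈ commutator G → μ ⟨x, h1⟩ = 1)
    (hext : ∀ ν : K →* A,
      (∀ (x : G) (h1 : x ∈ K), x ∈ commutator G → ν ⟨x, h1⟩ = 1) →
      ∃ ν' : G →* A, ∀ k : K, ν' k = ν k) :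
    ∃ m : G ⧸ K → A, (∀ x, m x ∈ CommGroup.torsion A) ∧
      ∀ x y, (μ (α x y) : A) = m x * m y * (m (x * y))⁻¹ := by
  obtain ⟨ν, hν⟩ := hext μ hμtriv
  obtain ⟨σ, -, hσ⟩ := hαd
  refine ⟨fun x => ν (σ x), fun x => ν.mem_torsion_of_finite (σ x), fun x y => ?_⟩
  rw [← hν, ν.map_factor_set_eq_coboundary hσ]

/-- Proposition 10.9(b): if `K ≤ Z(G)`, `κ : K → A` is faithful, `α` describes the
central extension `1 → K → G → G/K → 1`, and `μ : K → A` is a homomorphism trivial on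
`K̃ = K ∩ G'`, then the class `[μ∘α] ∈ H²(G/K, tor A)` is trivial — provided every
homomorphism `K → A` trivial on `K̃` extends to a homomorphism `G → A`. -/
theorem mu_alpha_coboundary {G A : Type*} [Group G] [Finite G] [CommGroup A]
    (K : Subgroup G) [hKn : K.Normal] (hKc : K ≤ Subgroup.center G)
    (κ : K →* A) (hκinj : Function.Injective κ)
    (α : G ⧸ K → G ⧸ K → K) (hα : IsCocycle α) (hαd : Describes K α)
    (μ : K →* A)
    (hμtriv : ∀ (x : G) (h1 : x ∈ K), x ∈ commutator G → μ ⟨x, h1⟩ = 1)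
    (hext : ∀ ν : K →* A,
      (∀ (x : G) (h1 : x ∈ K), x ∈ commutator G → ν ⟨x, h1⟩ = 1) →
      ∃ ν' : G →* A, ∀ k : K, ν' k = ν k) :
    ∃ m : G ⧸ K → A, (∀ x, m x ∈ CommGroup.torsion A) ∧
      ∀ x y, (μ (α x y) : A) = m x * m y * (m (x * y))⁻¹ :=
  mu_alpha_coboundary_general K (hKn := hKn) α hαd μ hμtriv hext
end

section
/- Let $A$ be an abelian group such that for every $n$ the $n$-torsion subgroup of $A$ is cyclic of order $n_\pi$ (the $\pi$-part of $n$) for a fixed set of primes $\pi$. Then for every finite abelian group $B$: (a) $|\mathrm{Hom}(B,A)| = |B|_\pi$; (b) for every subgroup $C \le B$, the restriction map $\mathrm{Hom}(B,A) \to \mathrm{Hom}(C,A)$ is surjective with kernel $\mathrm{Hom}(B/C, A)$; (c) $\bigcap_{\mu \in \mathrm{Hom}(B,A)} \ker\mu = B_{\pi'}$, the $\pi'$-torsion subgroup of $B$. -/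
/-- The `n`-torsion subgroup `{a | a^n = 1}` of an abelian group `A`. -/
def nTorsion (A : Type*) [CommGroup A] (n : ℕ) : Subgroup A where
  carrier := {a | a ^ n = 1}
  one_mem' := one_pow n
  mul_mem' := by
    intro a b ha hb
    simp only [Set.mem_setOf_eq] at *
    rw [mul_pow, ha, hb, one_mul]
  inv_mem' := by
    intro a ha
    simp only [Set.mem_setOf_eq] at *
    rw [inv_pow, ha, inv_one]

/-- The `π`-part `n_π` of a natural number `n`: the largest divisor of `n` all of whose
prime factors lie in `π`. -/
def piPart (π : ℕ → Prop) [DecidablePred π] (n : ℕ) : ℕ :=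
  ∏ p ∈ n.primeFactors.filter π, p ^ (n.factorization p)

section PiPart
variable {π : ℕ → Prop} [DecidablePred π]

lemma piPart_eq_prod (n : ℕ) :
    piPart π n = n.factorization.prod fun p k => if π p then p ^ k else 1 := by
  rw [piPart, Finsupp.prod, Nat.support_factorization, Finset.prod_filter]

lemma piPart_pos (n : ℕ) : 0 < piPart π n := by
  apply Finset.prod_pos
  intro p hp
  exact pow_pos (Nat.prime_of_mem_primeFactors (Finset.mem_filter.1 hp).1).pos _

lemma piPart_one : piPart π 1 = 1 := by simp [piPart]

lemma piPart_mul {a b : ℕ} (ha : a ≠ 0) (hb : b ≠ 0) :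
    piPart π (a * b) = piPart π a * piPart π b := by
  rw [piPart_eq_prod, piPart_eq_prod, piPart_eq_prod, Nat.factorization_mul ha hb]
  exact Finsupp.prod_add_index' (fun p => by split <;> simp)
    (fun p k l => by split <;> simp [pow_add])

lemma pi_mem_of_dvd_piPart {q n : ℕ} (hq : q.Prime) (h : q ∣ piPart π n) : π q := by
  rw [piPart] at h
  obtain ⟨p, hp, hpd⟩ := hq.prime.exists_mem_finset_dvd h
  obtain ⟨hp1, hp2⟩ := Finset.mem_filter.1 hp
  have hpp := Nat.prime_of_mem_primeFactors hp1
  have hqp : q = p :=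
    (Nat.prime_dvd_prime_iff_eq hq hpp).1 (hq.dvd_of_dvd_pow hpd)
  exact hqp ▸ hp2

lemma piPart_eq_self {m : ℕ} (hm : m ≠ 0) (h : ∀ p ∈ m.primeFactors, π p) :
    piPart π m = m := by
  rw [piPart, Finset.filter_true_of_mem h]
  conv_rhs => rw [← Nat.factorization_prod_pow_eq_self hm]
  rw [Finsupp.prod, Nat.support_factorization]

lemma piPart_eq_self_of_dvd {m n : ℕ} (hm : m ≠ 0) (h : m ∣ piPart π n) :
    piPart π m = m :=
  piPart_eq_self hm fun p hp =>
    pi_mem_of_dvd_piPart (Nat.prime_of_mem_primeFactors hp)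
      ((Nat.dvd_of_mem_primeFactors hp).trans h)

end PiPart

set_option linter.unusedSectionVars false

section Torsion
variable {A : Type*} [CommGroup A] {π : ℕ → Prop} [DecidablePred π]

lemma mem_nTorsion_iff {a : A} {n : ℕ} : a ∈ nTorsion A n ↔ a ^ n = 1 := Iff.rfl

lemma finite_nTorsion
    (hA : ∀ n : ℕ, 0 < n → IsCyclic (nTorsion A n) ∧ Nat.card (nTorsion A n) = piPart π n)
    (n : ℕ) (hn : 0 < n) : Finite (nTorsion A n) :=
  Nat.finite_of_card_ne_zero (by rw [(hA n hn).2]; exact (piPart_pos n).ne')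

lemma exists_root
    (hA : ∀ n : ℕ, 0 < n → IsCyclic (nTorsion A n) ∧ Nat.card (nTorsion A n) = piPart π n)
    {a : A} {k n : ℕ} (hk : 0 < k) (hn : 0 < n) (ha : a ^ n = 1) :
    ∃ x : A, x ^ k = a := by
  have hfin : IsOfFinOrder a := isOfFinOrder_iff_pow_eq_one.2 ⟨n, hn, ha⟩
  set m := orderOf a with hmdef
  have hm : 0 < m := hfin.orderOf_pos
  have hfinT : Finite (nTorsion A n) := finite_nTorsion hA n hn
  have haT : a ∈ nTorsion A n := ha
  have hdvd : m ∣ piPart π n := by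
    rw [← (hA n hn).2]
    exact (nTorsion A n).orderOf_dvd_natCard haT
  have hmpi : piPart π m = m := piPart_eq_self_of_dvd hm.ne' hdvd
  have hkm : 0 < k * m := Nat.mul_pos hk hm
  have hfinG : Finite (nTorsion A (k * m)) := finite_nTorsion hA _ hkm
  let ψ : nTorsion A (k * m) →* A := (powMonoidHom k).comp (nTorsion A (k * m)).subtype
  have hψ : ∀ y : nTorsion A (k * m), ψ y = (y : A) ^ k := fun y => rfl
  have hker : ∀ y : nTorsion A (k * m), y ∈ ψ.ker ↔ (y : A) ^ k = 1 := by
    intro y; rw [MonoidHom.mem_ker, hψ]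
  have e : ψ.ker ≃ nTorsion A k :=
    { toFun := fun y => ⟨((y : nTorsion A (k * m)) : A), (hker _).1 y.2⟩
      invFun := fun x => ⟨⟨(x : A), show (x : A) ^ (k * m) = 1 by
        rw [pow_mul, x.2, one_pow]⟩, (hker _).2 x.2⟩
      left_inv := fun y => rfl
      right_inv := fun x => rfl }
  have hcardker : Nat.card ψ.ker = piPart π k := by
    rw [Nat.card_congr e, (hA k hk).2]
  have hcardG : Nat.card (nTorsion A (k * m)) = piPart π k * m := by
    rw [(hA _ hkm).2, piPart_mul hk.ne' hm.ne', hmpi]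
  have h1 : Nat.card (nTorsion A (k * m))
      = Nat.card ((nTorsion A (k * m)) ⧸ ψ.ker) * Nat.card ψ.ker :=
    Subgroup.card_eq_card_quotient_mul_card_subgroup _
  have h2 : Nat.card ((nTorsion A (k * m)) ⧸ ψ.ker) = Nat.card ψ.range :=
    Nat.card_congr (QuotientGroup.quotientKerEquivRange ψ).toEquiv
  have hrange : Nat.card ψ.range = m := by
    have hkpos : 0 < piPart π k := piPart_pos k
    rw [hcardG, h2, hcardker] at h1
    -- h1 : piPart π k * m = Nat.card ψ.range * piPart π k
    apply Nat.eq_of_mul_eq_mul_right hkpos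
    rw [← h1, mul_comm]
  have hle : ψ.range ≤ nTorsion A m := by
    rintro y ⟨x, rfl⟩
    show ψ x ^ m = 1
    rw [hψ, ← pow_mul]
    exact x.2
  have hfinm : Finite (nTorsion A m) := finite_nTorsion hA m hm
  have heq : ψ.range = nTorsion A m := by
    apply Subgroup.eq_of_le_of_card_ge hle
    rw [(hA m hm).2, hmpi, hrange]
  have haR : a ∈ ψ.range := heq ▸ (show a ∈ nTorsion A m from pow_orderOf_eq_one a)
  obtain ⟨x, hx⟩ := haR
  exact ⟨x, hx⟩

lemma hom_finite
    (hA : ∀ n : ℕ, 0 < n → IsCyclic (nTorsion A n) ∧ Nat.card (nTorsion A n) = piPart π n)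
    (B : Type*) [Group B] [Finite B] : Finite (B →* A) := by
  have hn : 0 < Nat.card B := Nat.card_pos
  have : Finite (nTorsion A (Nat.card B)) := finite_nTorsion hA _ hn
  have hinj : Function.Injective
      (fun (f : B →* A) (b : B) => (⟨f b, show (f b) ^ (Nat.card B) = 1 by
        rw [← map_pow, pow_card_eq_one', map_one]⟩ : nTorsion A (Nat.card B))) := by
    intro f g h
    ext b
    exact congrArg Subtype.val (congrFun h b)
  exact Finite.of_injective _ hinj

end Torsion

section Ext
variable {A : Type*} [CommGroup A] {π : ℕ → Prop} [DecidablePred π]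
variable {B : Type*} [CommGroup B] [Finite B]

lemma exists_hom_zpowers (b : B) (x : A) (hx : x ^ orderOf b = 1) :
    ∃ f : Subgroup.zpowers b →* A,
      ∀ (y : Subgroup.zpowers b) (z : ℤ), (y : B) = b ^ z → f y = x ^ z := by
  let φ : Multiplicative ℤ →* Subgroup.zpowers b :=
    { toFun := fun z => ⟨b ^ z.toAdd, Subgroup.zpow_mem _ (Subgroup.mem_zpowers b) _⟩
      map_one' := Subtype.ext (by simp)
      map_mul' := fun y z => Subtype.ext (by simp [zpow_add]) }
  have hφ : ∀ z : Multiplicative ℤ, ((φ z : Subgroup.zpowers b) : B) = b ^ z.toAdd :=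
    fun z => rfl
  have hφs : Function.Surjective φ := by
    rintro ⟨y, hy⟩
    obtain ⟨z, hz⟩ := Subgroup.mem_zpowers_iff.1 hy
    exact ⟨Multiplicative.ofAdd z, Subtype.ext (by rw [hφ]; simpa using hz)⟩
  have hker : φ.ker ≤ (zpowersHom A x).ker := by
    intro z hz
    rw [MonoidHom.mem_ker] at hz ⊢
    have h1 : b ^ z.toAdd = 1 := by rw [← hφ z, hz]; rfl
    obtain ⟨t, ht⟩ := (orderOf_dvd_iff_zpow_eq_one).2 h1
    rw [zpowersHom_apply, ht, zpow_mul, zpow_natCast, hx, one_zpow]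
  refine ⟨(φ.liftOfSurjective hφs) ⟨zpowersHom A x, hker⟩, ?_⟩
  rintro y z hyz
  have h1 : φ (Multiplicative.ofAdd z) = y := by
    apply Subtype.ext
    rw [hφ]
    simpa using hyz.symm
  have h2 := MonoidHom.liftOfRightInverse_comp_apply φ _
    (Function.rightInverse_surjInv hφs) ⟨zpowersHom A x, hker⟩ (Multiplicative.ofAdd z)
  rw [h1] at h2
  rw [h2, zpowersHom_apply]
  simp

lemma ext_step
    (hA : ∀ n : ℕ, 0 < n → IsCyclic (nTorsion A n) ∧ Nat.card (nTorsion A n) = piPart π n)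
    (C : Subgroup B) (b : B) (f : C →* A) :
    ∃ (D : Subgroup B) (g : D →* A), C ≤ D ∧ b ∈ D ∧
      ∀ (c : C) (h : (c : B) ∈ D), g ⟨c, h⟩ = f c := by
  classical
  have hb : 0 < orderOf b := orderOf_pos b
  have hex : ∃ j, 0 < j ∧ b ^ j ∈ C :=
    ⟨orderOf b, hb, by rw [pow_orderOf_eq_one]; exact one_mem C⟩
  set k := Nat.find hex with hkdef
  obtain ⟨hk0, hkC⟩ : 0 < k ∧ b ^ k ∈ C := Nat.find_spec hex
  have key : ∀ z : ℤ, b ^ z ∈ C → (k : ℤ) ∣ z := by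
    intro z hz
    have hk0' : (k : ℤ) ≠ 0 := by exact_mod_cast hk0.ne'
    have hr0 : 0 ≤ z % k := Int.emod_nonneg z hk0'
    have hrk : z % k < k := Int.emod_lt_of_pos z (by exact_mod_cast hk0)
    have hzr : b ^ (z % k) ∈ C := by
      have hzk : z % k = z - k * (z / k) := by rw [Int.emod_def]
      rw [hzk, zpow_sub, zpow_mul]
      refine mul_mem hz (inv_mem (Subgroup.zpow_mem _ ?_ _))
      rwa [zpow_natCast]
    rcases eq_or_lt_of_le hr0 with h0 | hpos
    · exact Int.dvd_of_emod_eq_zero h0.symm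
    · exfalso
      have h2 : (z % k).toNat < k := by omega
      refine Nat.find_min hex h2 ⟨by omega, ?_⟩
      have h3 : b ^ (((z % k).toNat : ℤ)) ∈ C := by
        rw [Int.toNat_of_nonneg hr0]; exact hzr
      rwa [zpow_natCast] at h3
  set bk : C := ⟨b ^ k, hkC⟩ with hbkdef
  have habk : (f bk) ^ orderOf b = 1 := by
    rw [← map_pow]
    have hone : bk ^ orderOf b = 1 := by
      apply Subtype.ext
      show ((bk ^ orderOf b : C) : B) = 1
      rw [SubmonoidClass.coe_pow]
      show (b ^ k) ^ orderOf b = 1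
      rw [← pow_mul, mul_comm, pow_mul, pow_orderOf_eq_one, one_pow]
    rw [hone, map_one]
  obtain ⟨x, hxk⟩ := exists_root hA hk0 hb habk
  let φ : C × Multiplicative ℤ →* B :=
    (C.subtype.comp (MonoidHom.fst C (Multiplicative ℤ))) *
      ((zpowersHom B b).comp (MonoidHom.snd C (Multiplicative ℤ)))
  have hφ : ∀ (c : C) (z : Multiplicative ℤ), φ (c, z) = (c : B) * b ^ z.toAdd :=
    fun c z => rfl
  let ψ : C × Multiplicative ℤ →* A :=
    (f.comp (MonoidHom.fst C (Multiplicative ℤ))) *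
      ((zpowersHom A x).comp (MonoidHom.snd C (Multiplicative ℤ)))
  have hψ : ∀ (c : C) (z : Multiplicative ℤ), ψ (c, z) = f c * x ^ z.toAdd :=
    fun c z => rfl
  have hkerle : φ.rangeRestrict.ker ≤ ψ.ker := by
    rintro ⟨c, z⟩ hp
    rw [MonoidHom.mem_ker] at hp ⊢
    have hp1 : φ (c, z) = 1 := by
      have := congrArg (Subtype.val) hp
      simpa [MonoidHom.coe_rangeRestrict] using this
    rw [hφ] at hp1
    have hcz : (c : B) = b ^ (-z.toAdd) := by
      rw [zpow_neg, eq_inv_iff_mul_eq_one]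
      exact hp1
    have hbz : b ^ (-z.toAdd) ∈ C := hcz ▸ c.2
    obtain ⟨t, ht⟩ := key _ hbz
    have hc : c = bk ^ t := by
      apply Subtype.ext
      show (c : B) = ((bk ^ t : C) : B)
      rw [SubgroupClass.coe_zpow]
      show (c : B) = (b ^ k) ^ t
      rw [hcz, ht, zpow_mul, zpow_natCast]
    have hz : z.toAdd = -((k : ℤ) * t) := by omega
    rw [hψ, hc, map_zpow, hz, zpow_neg, ← hxk]
    rw [← zpow_natCast x k, ← zpow_mul]
    exact mul_inv_cancel _
  set g := (φ.rangeRestrict.liftOfSurjective φ.rangeRestrict_surjective) ⟨ψ, hkerle⟩ with hgdef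
  have hgφ : ∀ p : C × Multiplicative ℤ, g (φ.rangeRestrict p) = ψ p := by
    intro p
    exact MonoidHom.liftOfRightInverse_comp_apply _ _
      (Function.rightInverse_surjInv _) ⟨ψ, hkerle⟩ p
  refine ⟨φ.range, g, ?_, ?_, ?_⟩
  · intro c hc
    refine ⟨(⟨c, hc⟩, 1), ?_⟩
    rw [hφ]
    simp
  · refine ⟨(1, Multiplicative.ofAdd 1), ?_⟩
    rw [hφ]
    simp
  · intro c h
    have h1 : φ.rangeRestrict (c, 1) = ⟨(c : B), h⟩ := by
      apply Subtype.ext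
      rw [MonoidHom.coe_rangeRestrict, hφ]
      simp
    have h2 := hgφ (c, 1)
    rw [h1, hψ] at h2
    rw [h2]
    simp

end Ext

section Ext2
variable {A : Type*} [CommGroup A] {π : ℕ → Prop} [DecidablePred π]
variable {B : Type*} [CommGroup B] [Finite B]

lemma exists_extension_top (C : Subgroup B) (f : C →* A) (hmem : ∀ b : B, b ∈ C) :
    ∃ g : B →* A, ∀ c : C, g c = f c :=
  ⟨f.comp ((MonoidHom.id B).codRestrict C hmem), fun c => congrArg f (Subtype.ext rfl)⟩

lemma exists_extension
    (hA : ∀ n : ℕ, 0 < n → IsCyclic (nTorsion A n) ∧ Nat.card (nTorsion A n) = piPart π n)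
    (C : Subgroup B) (f : C →* A) :
    ∃ g : B →* A, ∀ c : C, g c = f c := by
  suffices h : ∀ (d : ℕ) (C : Subgroup B) (f : C →* A), Nat.card B - Nat.card C ≤ d →
      ∃ g : B →* A, ∀ c : C, g c = f c from h (Nat.card B) C f (Nat.sub_le _ _)
  intro d
  induction d with
  | zero =>
    intro C f h
    have hle : Nat.card C ≤ Nat.card B := Subgroup.card_le_card_group C
    have hc0 : 0 < Nat.card C := Nat.card_pos
    have hC : C = ⊤ := Subgroup.eq_top_of_card_eq _ (by omega)
    exact exists_extension_top C f (fun b => hC ▸ Subgroup.mem_top b)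
  | succ d ih =>
    intro C f h
    by_cases hmem : ∀ b : B, b ∈ C
    · exact exists_extension_top C f hmem
    · push_neg at hmem
      obtain ⟨b, hb⟩ := hmem
      obtain ⟨D, g', hCD, hbD, hg'⟩ := ext_step hA C b f
      have hltCD : Nat.card C < Nat.card D := by
        have hle : Nat.card C ≤ Nat.card D := Subgroup.card_le_of_le hCD
        rcases lt_or_eq_of_le hle with hlt | heq
        · exact hlt
        · exfalso
          have hbij : Function.Bijective (Subgroup.inclusion hCD) :=
            (Nat.bijective_iff_injective_and_card _).2
              ⟨Subgroup.inclusion_injective hCD, heq⟩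
          obtain ⟨c, hc⟩ := hbij.2 ⟨b, hbD⟩
          have : (c : B) = b := congrArg Subtype.val hc
          exact hb (this ▸ c.2)
      have hDB : Nat.card D ≤ Nat.card B := Subgroup.card_le_card_group D
      obtain ⟨g, hg⟩ := ih D g' (by omega)
      refine ⟨g, fun c => ?_⟩
      have h1 := hg ⟨(c : B), hCD c.2⟩
      rw [h1, hg' c (hCD c.2)]

lemma factor_through_quotient (C : Subgroup B) (g : B →* A) :
    (∀ c : C, g c = 1) ↔
      ∃ gbar : B ⧸ C →* A, ∀ b : B, gbar (QuotientGroup.mk b) = g b := by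
  constructor
  · intro h
    refine ⟨QuotientGroup.lift C g (fun c hc => h ⟨c, hc⟩), fun b => ?_⟩
    rfl
  · rintro ⟨gbar, hgbar⟩ c
    have h1 : (QuotientGroup.mk (c : B) : B ⧸ C) = 1 :=
      (QuotientGroup.eq_one_iff _).2 c.2
    rw [← hgbar, h1, map_one]

lemma hom_zpowers_card
    (hA : ∀ n : ℕ, 0 < n → IsCyclic (nTorsion A n) ∧ Nat.card (nTorsion A n) = piPart π n)
    (b : B) : Nat.card ((Subgroup.zpowers b) →* A) = piPart π (orderOf b) := by
  have hb : 0 < orderOf b := orderOf_pos b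
  have hfin : Finite (nTorsion A (orderOf b)) := finite_nTorsion hA _ hb
  set bb : Subgroup.zpowers b := ⟨b, Subgroup.mem_zpowers b⟩ with hbb
  have hF : ∀ f : (Subgroup.zpowers b) →* A, (f bb) ^ orderOf b = 1 := by
    intro f
    rw [← map_pow]
    have : bb ^ orderOf b = 1 := by
      apply Subtype.ext
      rw [SubmonoidClass.coe_pow]
      exact pow_orderOf_eq_one b
    rw [this, map_one]
  have hbij : Function.Bijective
      (fun f : (Subgroup.zpowers b) →* A => (⟨f bb, hF f⟩ : nTorsion A (orderOf b))) := by
    constructor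
    · intro f g hfg
      have h1 : f bb = g bb := congrArg Subtype.val hfg
      ext y
      obtain ⟨z, hz⟩ := Subgroup.mem_zpowers_iff.1 y.2
      have hy : y = bb ^ z := by
        apply Subtype.ext
        rw [SubgroupClass.coe_zpow]
        exact hz.symm
      rw [hy, map_zpow, map_zpow, h1]
    · rintro ⟨x, hx⟩
      obtain ⟨f, hf⟩ := exists_hom_zpowers b x hx
      refine ⟨f, Subtype.ext ?_⟩
      have := hf bb 1 (by simp [hbb])
      simpa using this
  rw [Nat.card_eq_of_bijective _ hbij, (hA _ hb).2]

lemma part_a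
    (hA : ∀ n : ℕ, 0 < n → IsCyclic (nTorsion A n) ∧ Nat.card (nTorsion A n) = piPart π n) :
    ∀ (n : ℕ) (B : Type*) [CommGroup B] [Finite B], Nat.card B ≤ n →
      Nat.card (B →* A) = piPart π (Nat.card B) := by
  intro n
  induction n with
  | zero =>
    intro B _ _ h
    exact absurd h (by have : 0 < Nat.card B := Nat.card_pos; omega)
  | succ n ih =>
    intro B _ _ hcard
    by_cases htriv : ∀ b : B, b = 1
    · have hsub : Subsingleton B := ⟨fun x y => by rw [htriv x, htriv y]⟩
      have h1 : Nat.card B = 1 := Nat.card_eq_one_iff_unique.2 ⟨⟨fun x y => by rw [htriv x, htriv y]⟩, ⟨1⟩⟩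
      have h2 : Nat.card (B →* A) = 1 := by
        apply Nat.card_eq_one_iff_unique.2
        refine ⟨⟨fun f g => ?_⟩, ⟨1⟩⟩
        ext b
        rw [htriv b, map_one, map_one]
      rw [h1, h2, piPart_one]
    · push_neg at htriv
      obtain ⟨b, hb⟩ := htriv
      have hordb : 1 < orderOf b := by
        have h1 : orderOf b ≠ 1 := fun h => hb (orderOf_eq_one_iff.1 h)
        have h2 : 0 < orderOf b := orderOf_pos b
        omega
      set C := Subgroup.zpowers b with hC
      have hcardC : Nat.card C = orderOf b := Nat.card_zpowers b
      -- restriction homomorphism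
      have hfinhomB : Finite (B →* A) := hom_finite hA B
      have hfinhomC : Finite (C →* A) := hom_finite hA C
      have hfinhomQ : Finite (B ⧸ C →* A) := hom_finite hA (B ⧸ C)
      set ρ : (B →* A) →* (C →* A) :=
        { toFun := fun f => f.comp C.subtype
          map_one' := MonoidHom.one_comp _
          map_mul' := fun f g => rfl } with hρ
      have hρs : Function.Surjective ρ := by
        intro f
        obtain ⟨g, hg⟩ := exists_extension hA C f
        exact ⟨g, MonoidHom.ext fun c => hg c⟩
      -- card of domain = card quotient by kernel * card kernel
      have hlag : Nat.card (B →* A) = Nat.card ((B →* A) ⧸ ρ.ker) * Nat.card ρ.ker :=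
        Subgroup.card_eq_card_quotient_mul_card_subgroup _
      have hquot : Nat.card ((B →* A) ⧸ ρ.ker) = Nat.card (C →* A) :=
        Nat.card_congr (QuotientGroup.quotientKerEquivOfSurjective ρ hρs).toEquiv
      -- kernel ≃ homs from quotient
      have hkerbij : Nat.card (B ⧸ C →* A) = Nat.card ρ.ker := by
        have hmk : ∀ (gbar : B ⧸ C →* A), gbar.comp (QuotientGroup.mk' C) ∈ ρ.ker := by
          intro gbar
          rw [MonoidHom.mem_ker]
          ext c
          show gbar (QuotientGroup.mk (c : B)) = 1
          rw [(QuotientGroup.eq_one_iff _).2 c.2, map_one]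
        apply Nat.card_eq_of_bijective
          (fun gbar : B ⧸ C →* A => (⟨gbar.comp (QuotientGroup.mk' C), hmk gbar⟩ : ρ.ker))
        constructor
        · intro g1 g2 h12
          have h13 : g1.comp (QuotientGroup.mk' C) = g2.comp (QuotientGroup.mk' C) :=
            congrArg Subtype.val h12
          ext q
          exact DFunLike.congr_fun h13 q
        · rintro ⟨g, hg⟩
          rw [MonoidHom.mem_ker] at hg
          have hg' : ∀ c : C, g c = 1 := fun c => DFunLike.congr_fun hg c
          obtain ⟨gbar, hgbar⟩ := (factor_through_quotient C g).1 hg'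
          refine ⟨gbar, Subtype.ext (MonoidHom.ext fun bq => hgbar bq)⟩
      -- Lagrange for B and C
      have hBC : Nat.card B = Nat.card (B ⧸ C) * Nat.card C :=
        Subgroup.card_eq_card_quotient_mul_card_subgroup _
      have hQpos : 0 < Nat.card (B ⧸ C) := Nat.card_pos
      have hBpos : 0 < Nat.card B := Nat.card_pos
      have hQlt : Nat.card (B ⧸ C) ≤ n := by
        rw [hcardC] at hBC
        nlinarith
      have ihQ : Nat.card (B ⧸ C →* A) = piPart π (Nat.card (B ⧸ C)) := ih (B ⧸ C) hQlt
      have hCA : Nat.card (C →* A) = piPart π (orderOf b) := hom_zpowers_card hA b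
      rw [hlag, hquot, ← hkerbij, ihQ, hCA, hBC, hcardC,
        piPart_mul hQpos.ne' (by omega : orderOf b ≠ 0), mul_comm]

end Ext2

/-- Proposition 10.5(a)-(c). -/
theorem hom_into_A_properties {A : Type*} [CommGroup A] (π : ℕ → Prop) [DecidablePred π]
    (hπ : ∀ p, π p → p.Prime)
    (hA : ∀ n : ℕ, 0 < n → IsCyclic (nTorsion A n) ∧ Nat.card (nTorsion A n) = piPart π n)
    (B : Type*) [CommGroup B] [Finite B] :
    (Nat.card (B →* A) = piPart π (Nat.card B)) ∧
    (∀ C : Subgroup B,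
      (∀ f : C →* A, ∃ g : B →* A, ∀ c : C, g c = f c) ∧
      (∀ g : B →* A, (∀ c : C, g c = 1) ↔
        ∃ gbar : B ⧸ C →* A, ∀ b : B, gbar (QuotientGroup.mk b) = g b)) ∧
    (∀ b : B, (∀ f : B →* A, f b = 1) ↔ piPart π (orderOf b) = 1) := by
  refine ⟨part_a hA (Nat.card B) B le_rfl,
    fun C => ⟨fun f => exists_extension hA C f, fun g => factor_through_quotient C g⟩, ?_⟩
  intro b
  have hord : 0 < orderOf b := orderOf_pos b
  have hfinT : Finite (nTorsion A (orderOf b)) := finite_nTorsion hA _ hord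
  constructor
  · intro hall
    by_contra hne
    have hgt : 1 < Nat.card (nTorsion A (orderOf b)) := by
      rw [(hA _ hord).2]
      have := piPart_pos (π := π) (orderOf b)
      omega
    have hnt : Nontrivial (nTorsion A (orderOf b)) :=
      Finite.one_lt_card_iff_nontrivial.1 hgt
    obtain ⟨x, hx⟩ := exists_ne (1 : nTorsion A (orderOf b))
    obtain ⟨f0, hf0⟩ := exists_hom_zpowers b (x : A) x.2
    obtain ⟨g, hg⟩ := exists_extension hA (Subgroup.zpowers b) f0
    have hgb : g b = (x : A) := by
      have h1 := hg ⟨b, Subgroup.mem_zpowers b⟩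
      rw [h1, hf0 ⟨b, Subgroup.mem_zpowers b⟩ 1 (by simp)]
      simp
    apply hx
    apply Subtype.ext
    rw [← hgb, hall g]
    rfl
  · intro h1 f
    have hT : f b ∈ nTorsion A (orderOf b) := by
      show (f b) ^ (orderOf b) = 1
      rw [← map_pow, pow_orderOf_eq_one, map_one]
    have hcard1 : Nat.card (nTorsion A (orderOf b)) = 1 := by
      rw [(hA _ hord).2, h1]
    have hsub : Subsingleton (nTorsion A (orderOf b)) :=
      Nat.card_eq_one_iff_unique.1 hcard1 |>.1
    have : (⟨f b, hT⟩ : nTorsion A (orderOf b)) = 1 := Subsingleton.elim _ _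
    exact congrArg Subtype.val this
end

section
/- Let $S$ be a group and $B$ an abelian group with trivial $S$-action, $\alpha \in Z^2(S,B)$ a 2-cocycle, and for $n \ge 1$ define functions $\alpha_n : S^{2n} \to B$ recursively by $\alpha_1(s_1,s_2) = \alpha(s_1,s_2)\alpha(s_2,s_1)^{-1}\alpha(s_2s_1, s_1^{-1}s_2^{-1})^{-1}\alpha(s_1s_2, s_1^{-1}s_2^{-1})\alpha(1,1)^{-1}$ and $\alpha_n(s_1,\ldots,s_{2n}) = \alpha_{n-1}(s_1,\ldots,s_{2n-2})\,\alpha_1(s_{2n-1},s_{2n})\,\alpha([s_1,s_2]\cdots[s_{2n-3},s_{2n-2}],[s_{2n-1},s_{2n}])$. If $1 \to B \xrightarrow{\iota} T \xrightarrow{\pi} S \to 1$ is a central extension and $\sigma : S \to T$ is a section with $\sigma(s_1)\sigma(s_2) = \iota(\alpha(s_1,s_2))\sigma(s_1s_2)$, then for all $s_1,\ldots,s_{2n} \in S$: $[\sigma(s_1),\sigma(s_2)]\cdots[\sigma(s_{2n-1}),\sigma(s_{2n})] = \iota(\alpha_n(s_1,\ldots,s_{2n}))\,\sigma([s_1,s_2]\cdots[s_{2n-1},s_{2n}])$.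 -/
open scoped commutatorElement
/-- The product of commutators `[s₁,s₂] ⋯ [s₂ₙ₋₁,s₂ₙ]` (with `s i` indexed from `0`). -/
def commProd {S : Type*} [Group S] (s : ℕ → S) : ℕ → S
  | 0 => 1
  | n + 1 => commProd s n * ⁅s (2 * n), s (2 * n + 1)⁆

/-- The function `α₁`. -/
def alpha1 {S B : Type*} [Group S] [CommGroup B] (α : S → S → B) (x y : S) : B :=
  α x y * (α y x)⁻¹ * (α (y * x) (x⁻¹ * y⁻¹))⁻¹ * α (x * y) (x⁻¹ * y⁻¹) * (α 1 1)⁻¹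

/-- The functions `αₙ : S^{2n} → B`, defined recursively from `α₁`. -/
def alphaN {S B : Type*} [Group S] [CommGroup B] (α : S → S → B) (s : ℕ → S) : ℕ → B
  | 0 => 1
  | 1 => alpha1 α (s 0) (s 1)
  | n + 2 => alphaN α s (n + 1) * alpha1 α (s (2 * n + 2)) (s (2 * n + 3)) *
      α (commProd s (n + 1)) ⁅s (2 * n + 2), s (2 * n + 3)⁆

/-- Proposition 10.11(a): for a central extension `1 → B → T → S → 1` with section `σ`
satisfying `σ(s₁)σ(s₂) = ι(α(s₁,s₂))σ(s₁s₂)`, one has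
`[σ(s₁),σ(s₂)] ⋯ [σ(s₂ₙ₋₁),σ(s₂ₙ)] = ι(αₙ(s₁,…,s₂ₙ)) σ([s₁,s₂]⋯[s₂ₙ₋₁,s₂ₙ])`. -/
theorem alphaN_commutator_formula {S B T : Type*} [Group S] [CommGroup B] [Group T]
    (α : S → S → B) (hα : IsCocycle α)
    (ι : B →* T) (π : T →* S)
    (hinj : Function.Injective ι) (hsurj : Function.Surjective π)
    (hexact : π.ker = ι.range) (hcentral : ι.range ≤ Subgroup.center T)
    (σ : S → T) (hσ : ∀ s, π (σ s) = s)
    (hcoc : ∀ s1 s2, σ s1 * σ s2 = ι (α s1 s2) * σ (s1 * s2)) :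
    ∀ (n : ℕ), 1 ≤ n → ∀ s : ℕ → S,
      commProd (fun i => σ (s i)) n = ι (alphaN α s n) * σ (commProd s n) := by
  have hc : ∀ (b : B) (t : T), ι b * t = t * ι b := fun b t =>
    ((Subgroup.mem_center_iff.mp (hcentral ⟨b, rfl⟩)) t).symm
  have h1 : σ 1 = ι (α 1 1) := by
    have := hcoc 1 1
    rw [one_mul] at this
    exact mul_right_cancel this
  have comm1 : ∀ x y : S, ⁅σ x, σ y⁆ = ι (alpha1 α x y) * σ ⁅x, y⁆ := by
    intro x y
    have e1 : σ x * σ y * σ (x⁻¹ * y⁻¹) = ι (α x y * α (x * y) (x⁻¹ * y⁻¹)) * σ ⁅x, y⁆ := by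
      have hx : x * y * (x⁻¹ * y⁻¹) = ⁅x, y⁆ := by group
      rw [hcoc x y, mul_assoc, hcoc (x * y) (x⁻¹ * y⁻¹), hx, map_mul, mul_assoc]
    have e2 : σ y * σ x * σ (x⁻¹ * y⁻¹) = ι (α y x * (α (y * x) (x⁻¹ * y⁻¹) * α 1 1)) := by
      rw [hcoc y x, mul_assoc, hcoc (y * x) (x⁻¹ * y⁻¹)]
      have : y * x * (x⁻¹ * y⁻¹) = 1 := by group
      rw [this, h1, map_mul, map_mul]
    have e3 : ⁅σ x, σ y⁆ * (σ y * σ x * σ (x⁻¹ * y⁻¹)) = σ x * σ y * σ (x⁻¹ * y⁻¹) := by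
      group
    rw [e2, e1] at e3
    have e4 : ⁅σ x, σ y⁆ =
        ι (α x y * α (x * y) (x⁻¹ * y⁻¹)) * σ ⁅x, y⁆ *
          (ι (α y x * (α (y * x) (x⁻¹ * y⁻¹) * α 1 1)))⁻¹ := by
      rw [← e3, mul_assoc, mul_inv_cancel, mul_one]
    rw [e4, ← map_inv, mul_assoc, ← hc, ← mul_assoc, ← map_mul]
    congr 1
    simp only [alpha1, mul_inv_rev]
    simp [mul_comm, mul_left_comm, mul_assoc]
  intro n hn
  induction n with
  | zero => exact absurd hn (by norm_num)
  | succ m ih =>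
    intro s
    match m with
    | 0 =>
      simp only [commProd, alphaN, one_mul]
      simpa using comm1 (s 0) (s 1)
    | k + 1 =>
      have ihk := ih (by omega) s
      show commProd (fun i => σ (s i)) (k + 1) * ⁅σ (s (2 * (k + 1))), σ (s (2 * (k + 1) + 1))⁆
          = _
      have h2 : 2 * (k + 1) = 2 * k + 2 := by ring
      rw [h2, ihk, comm1]
      rw [show commProd s (k + 2) = commProd s (k + 1) * ⁅s (2 * k + 2), s (2 * k + 3)⁆ by
        simp [commProd, h2]]
      rw [show alphaN α s (k + 2) = alphaN α s (k + 1) * alpha1 α (s (2 * k + 2)) (s (2 * k + 3)) *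
        α (commProd s (k + 1)) ⁅s (2 * k + 2), s (2 * k + 3)⁆ from rfl]
      rw [mul_assoc, ← mul_assoc (σ (commProd s (k + 1))), ← hc, map_mul, map_mul]
      rw [mul_assoc, mul_assoc, mul_assoc]
      congr 2
      exact hcoc _ _
end

section
/- With the notation of the commutator-cocycle functions $\alpha_n$: (i) $(\alpha\beta)_n = \alpha_n\beta_n$ for 2-cocycles $\alpha,\beta \in Z^2(S,B)$; (ii) if $S$ is abelian and $\alpha$ is symmetric ($\alpha(s,t) = \alpha(t,s)$ for all $s,t$), then $\alpha_n$ is the constant function with value $\alpha(1,1)^{-1}$; (iii) if $\alpha$ is a coboundary, $\alpha(s,t) = \mu(s)\mu(t)\mu(st)^{-1}$ for some function $\mu : S \to B$, then $\alpha_n(s_1,\ldots,s_{2n}) = \mu([s_1,s_2]\cdots[s_{2n-1},s_{2n}])^{-1}$. -/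
open scoped commutatorElement
lemma alpha1_mul {S B : Type*} [Group S] [CommGroup B] (α β : S → S → B) (x y : S) :
    alpha1 (fun x y => α x y * β x y) x y = alpha1 α x y * alpha1 β x y := by
  simp only [alpha1, mul_inv_rev]
  apply Additive.ofMul.injective
  simp only [ofMul_mul, ofMul_inv]
  abel

lemma commProd_eq_one {S : Type*} [Group S] (hc : ∀ x y : S, x * y = y * x)
    (s : ℕ → S) (n : ℕ) : commProd s n = 1 := by
  induction n with
  | zero => rfl
  | succ n ih =>
    have h : ⁅s (2 * n), s (2 * n + 1)⁆ = 1 := by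
      rw [commutatorElement_def, hc (s (2 * n)) (s (2 * n + 1))]; group
    rw [commProd, ih, h, mul_one]

lemma alpha1_symm {S B : Type*} [Group S] [CommGroup B] (α : S → S → B)
    (hc : ∀ x y : S, x * y = y * x) (hs : ∀ x y, α x y = α y x) (x y : S) :
    alpha1 α x y = (α 1 1)⁻¹ := by
  rw [alpha1, hs x y, hc x y]
  group

lemma alpha1_cobound {S B : Type*} [Group S] [CommGroup B] (α : S → S → B) (μ : S → B)
    (h : ∀ x y, α x y = μ x * μ y * (μ (x * y))⁻¹) (x y : S) :
    alpha1 α x y = (μ ⁅x, y⁆)⁻¹ := by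
  have e1 : y * x * (x⁻¹ * y⁻¹) = 1 := by group
  have e2 : x * y * (x⁻¹ * y⁻¹) = ⁅x, y⁆ := by
    rw [commutatorElement_def]; group
  simp only [alpha1, h, e1, e2, mul_one, one_mul]
  apply Additive.ofMul.injective
  simp only [ofMul_mul, ofMul_inv]
  abel

/-- Proposition 10.11(b),(e),(f): (i) `(αβ)ₙ = αₙ βₙ`; (ii) if `S` is abelian and `α` is
symmetric then `αₙ` is constant with value `α(1,1)⁻¹`; (iii) if `α` is the coboundary of
`μ` then `αₙ(s₁,…,s₂ₙ) = μ([s₁,s₂]⋯[s₂ₙ₋₁,s₂ₙ])⁻¹`. -/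
theorem alphaN_properties {S B : Type*} [Group S] [CommGroup B] :
    (∀ (α β : S → S → B), IsCocycle α → IsCocycle β →
      ∀ (s : ℕ → S) (n : ℕ), 1 ≤ n →
        alphaN (fun x y => α x y * β x y) s n = alphaN α s n * alphaN β s n) ∧
    (∀ (α : S → S → B), IsCocycle α → (∀ x y : S, x * y = y * x) →
      (∀ x y, α x y = α y x) →
      ∀ (s : ℕ → S) (n : ℕ), 1 ≤ n → alphaN α s n = (α 1 1)⁻¹) ∧
    (∀ (α : S → S → B) (μ : S → B), (∀ x y, α x y = μ x * μ y * (μ (x * y))⁻¹) →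
      ∀ (s : ℕ → S) (n : ℕ), 1 ≤ n → alphaN α s n = (μ (commProd s n))⁻¹) := by
  refine ⟨fun α β _ _ s n hn => ?_, fun α _ hc hs s n hn => ?_, fun α μ h s n hn => ?_⟩
  · induction n, hn using Nat.le_induction with
    | base => simpa [alphaN] using alpha1_mul α β (s 0) (s 1)
    | succ n hn ih =>
      obtain ⟨m, rfl⟩ := Nat.exists_eq_add_of_le hn
      rw [add_comm 1 m] at ih ⊢
      show alphaN _ s (m + 2) = _
      rw [alphaN, alphaN, alphaN, ih, alpha1_mul]
      apply Additive.ofMul.injective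
      simp only [ofMul_mul, ofMul_inv]
      abel
  · induction n, hn using Nat.le_induction with
    | base => simpa [alphaN] using alpha1_symm α hc hs (s 0) (s 1)
    | succ n hn ih =>
      obtain ⟨m, rfl⟩ := Nat.exists_eq_add_of_le hn
      rw [add_comm 1 m] at ih ⊢
      show alphaN α s (m + 2) = _
      have h1 : ⁅s (2 * m + 2), s (2 * m + 3)⁆ = 1 := by
        rw [commutatorElement_def, hc (s (2 * m + 2)) (s (2 * m + 3))]; group
      rw [alphaN, ih, alpha1_symm α hc hs, commProd_eq_one hc, h1]
      group
  · induction n, hn using Nat.le_induction with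
    | base =>
      simpa [alphaN, commProd, commutatorElement_def] using
        alpha1_cobound α μ h (s 0) (s 1)
    | succ n hn ih =>
      obtain ⟨m, rfl⟩ := Nat.exists_eq_add_of_le hn
      rw [add_comm 1 m] at ih ⊢
      show alphaN α s (m + 2) = _
      have hcp : commProd s (m + 2)
          = commProd s (m + 1) * ⁅s (2 * m + 2), s (2 * m + 3)⁆ := rfl
      rw [alphaN, ih, alpha1_cobound α μ h, h, hcp]
      apply Additive.ofMul.injective
      simp only [ofMul_mul, ofMul_inv]
      abel
end
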